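/- arXiv:2511.09368 — 8 statements merged into one kernel-verified Lean document; each statement's English description precedes it below -/
import Mathlib

section
/- Let $r_1, r_2, r_3, r_4 > 0$ and let $\Theta_{12}, \Theta_{23}, \Theta_{34}, \Theta_{41}, \Theta_{24} \in [0, \pi/2]$. Define $l_{ij} = \sqrt{r_i^2 + r_j^2 + 2 r_i r_j \cos\Theta_{ij}}$ for each relevant pair, and suppose a convex planar quadrilateral $v_1 v_2 v_3 v_4$ exists realizing these side lengths with diagonal $v_2 v_4$ of length $l_{24}$ (so that triangles $v_1 v_2 v_4$ and $v_3 v_2 v_4$ have the given side lengths). Then the distance $l_{13} = |v_1 - v_3|$ satisfies $l_{13} \geq r_1 + r_3$, with equality if and only if $\Theta_{12} = \Theta_{23} = \Theta_{34} = \Theta_{41} = \pi/2$ and $\Theta_{24} = 0$. -/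
open Real

section aux

variable {E : Type*} [NormedAddCommGroup E] [InnerProductSpace ℝ E]

lemma dist_sq_convex (v u w : E) (t : ℝ) :
    dist v ((1-t)•u + t•w)^2
      = (1-t)*dist v u^2 + t*dist v w^2 - t*(1-t)*dist u w^2 := by
  have h1 : v - ((1-t)•u + t•w) = (1-t)•(v-u) + t•(v-w) := by module
  have h2 : u - w = (v - w) - (v - u) := by abel
  have e1 : ‖(1-t)•(v-u) + t•(v-w)‖^2
      = ‖(1-t)•(v-u)‖^2 + 2*(@inner ℝ _ _ ((1-t)•(v-u)) (t•(v-w))) + ‖t•(v-w)‖^2 :=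
    norm_add_sq_real _ _
  have e2 : ‖(v-w) - (v-u)‖^2
      = ‖v-w‖^2 - 2*(@inner ℝ _ _ (v-w) (v-u)) + ‖v-u‖^2 :=
    norm_sub_sq_real _ _
  have e3 : @inner ℝ _ _ ((1-t)•(v-u)) (t•(v-w)) = (1-t)*t*(@inner ℝ _ _ (v-w) (v-u)) := by
    rw [real_inner_smul_left, real_inner_smul_right, real_inner_comm]; ring
  simp only [dist_eq_norm]
  rw [h1, h2, e1, e3, e2, norm_smul, norm_smul]
  simp only [Real.norm_eq_abs, mul_pow, sq_abs]
  ring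

/-- Key inequality: any point of the segment `[u,w]` is at distance at least `r₁`
from `v`, with equality analysis. -/
lemma key_lemma (r₁ r₂ r₄ c₁₂ c₄₁ c₂₄ : ℝ) (hr₁ : 0 < r₁) (hr₂ : 0 < r₂) (hr₄ : 0 < r₄)
    (hc₁₂ : 0 ≤ c₁₂) (hc₄₁ : 0 ≤ c₄₁) (hc₂₄ : c₂₄ ≤ 1)
    (v u w : E) (t : ℝ) (ht0 : 0 ≤ t) (ht1 : t ≤ 1)
    (hu : dist v u ^ 2 = r₁^2 + r₂^2 + 2*r₁*r₂*c₁₂)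
    (hw : dist v w ^ 2 = r₁^2 + r₄^2 + 2*r₁*r₄*c₄₁)
    (huw : dist u w ^ 2 = r₂^2 + r₄^2 + 2*r₂*r₄*c₂₄) :
    r₁ ≤ dist v ((1-t)•u + t•w) ∧
      (dist v ((1-t)•u + t•w) = r₁ → c₁₂ = 0 ∧ c₄₁ = 0 ∧ c₂₄ = 1) := by
  have hid := dist_sq_convex v u w t
  rw [hu, hw, huw] at hid
  set d := dist v ((1-t)•u + t•w) with hdd
  have key : d^2 - r₁^2
      = (1-t)*(2*r₁*r₂*c₁₂) + t*(2*r₁*r₄*c₄₁)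
        + (t*(1-t))*(2*r₂*r₄*(1-c₂₄)) + ((1-t)*r₂ - t*r₄)^2 := by
    rw [hid]; ring
  have hd0 : 0 ≤ d := dist_nonneg
  have h1t : 0 ≤ 1 - t := by linarith
  have A1 : 0 ≤ (1-t)*(2*r₁*r₂*c₁₂) :=
    mul_nonneg h1t (mul_nonneg (by positivity) hc₁₂)
  have A2 : 0 ≤ t*(2*r₁*r₄*c₄₁) :=
    mul_nonneg ht0 (mul_nonneg (by positivity) hc₄₁)
  have A3 : 0 ≤ (t*(1-t))*(2*r₂*r₄*(1-c₂₄)) :=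
    mul_nonneg (mul_nonneg ht0 h1t) (mul_nonneg (by positivity) (by linarith))
  have A4 : 0 ≤ ((1-t)*r₂ - t*r₄)^2 := sq_nonneg _
  have hsq' : r₁^2 ≤ d^2 := by linarith
  have hle : r₁ ≤ d := (pow_le_pow_iff_left₀ hr₁.le hd0 two_ne_zero).mp hsq'
  refine ⟨hle, fun hEq => ?_⟩
  rw [hEq] at key
  have e1 : (1-t)*(2*r₁*r₂*c₁₂) = 0 := by linarith
  have e2 : t*(2*r₁*r₄*c₄₁) = 0 := by linarith
  have e3 : (t*(1-t))*(2*r₂*r₄*(1-c₂₄)) = 0 := by linarith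
  have e4 : (1-t)*r₂ - t*r₄ = 0 := by
    have : ((1-t)*r₂ - t*r₄)^2 = 0 := by linarith
    exact pow_eq_zero_iff (n := 2) (by norm_num) |>.mp this
  have ht0' : 0 < t := by
    rcases ht0.lt_or_eq with h | h
    · exact h
    · exfalso; rw [← h] at e4; norm_num at e4; linarith
  have ht1' : t < 1 := by
    rcases ht1.lt_or_eq with h | h
    · exact h
    · exfalso; rw [h] at e4; norm_num at e4; linarith
  have g1 : c₁₂ = 0 := by
    have h := (mul_eq_zero.mp e1).resolve_left (sub_pos.mpr ht1').ne'
    rcases mul_eq_zero.mp h with h' | h'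
    · exact absurd h' (by positivity : (0:ℝ) < 2*r₁*r₂).ne'
    · exact h'
  have g2 : c₄₁ = 0 := by
    have h := (mul_eq_zero.mp e2).resolve_left ht0'.ne'
    rcases mul_eq_zero.mp h with h' | h'
    · exact absurd h' (by positivity : (0:ℝ) < 2*r₁*r₄).ne'
    · exact h'
  have g3 : c₂₄ = 1 := by
    have h := (mul_eq_zero.mp e3).resolve_left (mul_pos ht0' (sub_pos.mpr ht1')).ne'
    rcases mul_eq_zero.mp h with h' | h'
    · exact absurd h' (by positivity : (0:ℝ) < 2*r₂*r₄).ne'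
    · linarith
  exact ⟨g1, g2, g3⟩

/-- Exact distance at the tangency point. -/
lemma key_eq (r₁ r₂ r₄ : ℝ) (hr₁ : 0 ≤ r₁) (hr₂ : 0 < r₂) (hr₄ : 0 < r₄)
    (v u w : E)
    (hu : dist v u ^ 2 = r₁^2 + r₂^2)
    (hw : dist v w ^ 2 = r₁^2 + r₄^2)
    (huw : dist u w ^ 2 = (r₂+r₄)^2) :
    dist v ((1-(r₂/(r₂+r₄)))•u + (r₂/(r₂+r₄))•w) = r₁ := by
  have hs : (0:ℝ) < r₂ + r₄ := by linarith
  have hid := dist_sq_convex v u w (r₂/(r₂+r₄))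
  rw [hu, hw, huw] at hid
  have hsq : dist v ((1-(r₂/(r₂+r₄)))•u + (r₂/(r₂+r₄))•w)^2 = r₁^2 := by
    rw [hid]; field_simp; ring
  have hd0 : (0:ℝ) ≤ dist v ((1-(r₂/(r₂+r₄)))•u + (r₂/(r₂+r₄))•w) := dist_nonneg
  have h0 : (dist v ((1-(r₂/(r₂+r₄)))•u + (r₂/(r₂+r₄))•w) - r₁)
      * (dist v ((1-(r₂/(r₂+r₄)))•u + (r₂/(r₂+r₄))•w) + r₁) = 0 := by
    linear_combination hsq
  rcases mul_eq_zero.mp h0 with h | h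
  · linarith
  · linarith

end aux

/-- Lemma 2.3 (He's reducible configuration): for a convex planar quadrilateral
`v₁v₂v₃v₄` whose sides and diagonal `v₂v₄` realize the circle-pattern distances with
nonobtuse intersection angles, the diagonal `v₁v₃` satisfies `l₁₃ ≥ r₁ + r₃`, with
equality iff the four side angles are `π/2` and the diagonal angle is `0`. -/
theorem stmt_0
    (r₁ r₂ r₃ r₄ : ℝ) (hr₁ : 0 < r₁) (hr₂ : 0 < r₂) (hr₃ : 0 < r₃) (hr₄ : 0 < r₄)
    (Θ₁₂ Θ₂₃ Θ₃₄ Θ₄₁ Θ₂₄ : ℝ)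
    (h12 : Θ₁₂ ∈ Set.Icc 0 (π / 2)) (h23 : Θ₂₃ ∈ Set.Icc 0 (π / 2))
    (h34 : Θ₃₄ ∈ Set.Icc 0 (π / 2)) (h41 : Θ₄₁ ∈ Set.Icc 0 (π / 2))
    (h24 : Θ₂₄ ∈ Set.Icc 0 (π / 2))
    (v₁ v₂ v₃ v₄ : EuclideanSpace ℝ (Fin 2))
    (hd12 : dist v₁ v₂ = Real.sqrt (r₁ ^ 2 + r₂ ^ 2 + 2 * r₁ * r₂ * Real.cos Θ₁₂))
    (hd23 : dist v₂ v₃ = Real.sqrt (r₂ ^ 2 + r₃ ^ 2 + 2 * r₂ * r₃ * Real.cos Θ₂₃))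
    (hd34 : dist v₃ v₄ = Real.sqrt (r₃ ^ 2 + r₄ ^ 2 + 2 * r₃ * r₄ * Real.cos Θ₃₄))
    (hd41 : dist v₄ v₁ = Real.sqrt (r₄ ^ 2 + r₁ ^ 2 + 2 * r₄ * r₁ * Real.cos Θ₄₁))
    (hd24 : dist v₂ v₄ = Real.sqrt (r₂ ^ 2 + r₄ ^ 2 + 2 * r₂ * r₄ * Real.cos Θ₂₄))
    (hconv : (segment ℝ v₁ v₃ ∩ segment ℝ v₂ v₄).Nonempty) :
    r₁ + r₃ ≤ dist v₁ v₃ ∧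
      (dist v₁ v₃ = r₁ + r₃ ↔
        Θ₁₂ = π / 2 ∧ Θ₂₃ = π / 2 ∧ Θ₃₄ = π / 2 ∧ Θ₄₁ = π / 2 ∧ Θ₂₄ = 0) := by
  have pip : 0 < π := Real.pi_pos
  have c12n : 0 ≤ Real.cos Θ₁₂ := Real.cos_nonneg_of_mem_Icc ⟨by linarith [h12.1], h12.2⟩
  have c23n : 0 ≤ Real.cos Θ₂₃ := Real.cos_nonneg_of_mem_Icc ⟨by linarith [h23.1], h23.2⟩
  have c34n : 0 ≤ Real.cos Θ₃₄ := Real.cos_nonneg_of_mem_Icc ⟨by linarith [h34.1], h34.2⟩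
  have c41n : 0 ≤ Real.cos Θ₄₁ := Real.cos_nonneg_of_mem_Icc ⟨by linarith [h41.1], h41.2⟩
  have c24le : Real.cos Θ₂₄ ≤ 1 := Real.cos_le_one _
  have c12le : Real.cos Θ₁₂ ≤ 1 := Real.cos_le_one _
  have c23le : Real.cos Θ₂₃ ≤ 1 := Real.cos_le_one _
  have c24n : 0 ≤ Real.cos Θ₂₄ := Real.cos_nonneg_of_mem_Icc ⟨by linarith [h24.1], h24.2⟩
  have n12 : (0:ℝ) ≤ r₁^2 + r₂^2 + 2*r₁*r₂*Real.cos Θ₁₂ := by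
    nlinarith [mul_nonneg (mul_nonneg hr₁.le hr₂.le) c12n]
  have n23 : (0:ℝ) ≤ r₂^2 + r₃^2 + 2*r₂*r₃*Real.cos Θ₂₃ := by
    nlinarith [mul_nonneg (mul_nonneg hr₂.le hr₃.le) c23n]
  have n34 : (0:ℝ) ≤ r₃^2 + r₄^2 + 2*r₃*r₄*Real.cos Θ₃₄ := by
    nlinarith [mul_nonneg (mul_nonneg hr₃.le hr₄.le) c34n]
  have n41 : (0:ℝ) ≤ r₄^2 + r₁^2 + 2*r₄*r₁*Real.cos Θ₄₁ := by
    nlinarith [mul_nonneg (mul_nonneg hr₄.le hr₁.le) c41n]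
  have n24 : (0:ℝ) ≤ r₂^2 + r₄^2 + 2*r₂*r₄*Real.cos Θ₂₄ := by
    nlinarith [mul_nonneg (mul_nonneg hr₂.le hr₄.le) c24n]
  have sq12 : dist v₁ v₂ ^ 2 = r₁^2 + r₂^2 + 2*r₁*r₂*Real.cos Θ₁₂ := by
    rw [hd12]; exact Real.sq_sqrt n12
  have sq14 : dist v₁ v₄ ^ 2 = r₁^2 + r₄^2 + 2*r₁*r₄*Real.cos Θ₄₁ := by
    rw [dist_comm, hd41, Real.sq_sqrt n41]; ring
  have sq32 : dist v₃ v₂ ^ 2 = r₃^2 + r₂^2 + 2*r₃*r₂*Real.cos Θ₂₃ := by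
    rw [dist_comm, hd23, Real.sq_sqrt n23]; ring
  have sq34 : dist v₃ v₄ ^ 2 = r₃^2 + r₄^2 + 2*r₃*r₄*Real.cos Θ₃₄ := by
    rw [hd34]; exact Real.sq_sqrt n34
  have sq24 : dist v₂ v₄ ^ 2 = r₂^2 + r₄^2 + 2*r₂*r₄*Real.cos Θ₂₄ := by
    rw [hd24]; exact Real.sq_sqrt n24
  obtain ⟨p, hp1, hp2⟩ := hconv
  rw [segment_eq_image ℝ v₂ v₄] at hp2
  obtain ⟨t, ht, hpt⟩ := hp2
  have hsum : dist v₁ p + dist p v₃ = dist v₁ v₃ := dist_add_dist_of_mem_segment hp1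
  have K1 := key_lemma r₁ r₂ r₄ (Real.cos Θ₁₂) (Real.cos Θ₄₁) (Real.cos Θ₂₄)
    hr₁ hr₂ hr₄ c12n c41n c24le v₁ v₂ v₄ t ht.1 ht.2 sq12 sq14 sq24
  have K3 := key_lemma r₃ r₂ r₄ (Real.cos Θ₂₃) (Real.cos Θ₃₄) (Real.cos Θ₂₄)
    hr₃ hr₂ hr₄ c23n c34n c24le v₃ v₂ v₄ t ht.1 ht.2 sq32 sq34 sq24
  simp only [] at hpt
  rw [show ((1 - t) • v₂ + t • v₄ : EuclideanSpace ℝ (Fin 2)) = p from hpt] at K1 K3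
  have hK3' : r₃ ≤ dist p v₃ := by rw [dist_comm]; exact K3.1
  have lower : r₁ + r₃ ≤ dist v₁ v₃ := by linarith [K1.1, hK3', hsum]
  -- θ = π/2 from cos θ = 0, for θ ∈ [0, π/2]
  have conv0 : ∀ θ : ℝ, θ ∈ Set.Icc 0 (π/2) → Real.cos θ = 0 → θ = π/2 := by
    intro θ hθ h0
    exact Real.injOn_cos ⟨hθ.1, by linarith [hθ.2]⟩ ⟨by linarith, by linarith⟩
      (by rw [h0, Real.cos_pi_div_two])
  refine ⟨lower, ?_, ?_⟩
  · intro hEq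
    have e1 : dist v₁ p = r₁ := by linarith [K1.1, hK3', hsum]
    have e3 : dist v₃ p = r₃ := by rw [dist_comm]; linarith [K1.1, hK3', hsum]
    obtain ⟨g12, g41, g24⟩ := K1.2 e1
    obtain ⟨g23, g34, _⟩ := K3.2 e3
    refine ⟨conv0 _ h12 g12, conv0 _ h23 g23, conv0 _ h34 g34, conv0 _ h41 g41, ?_⟩
    exact Real.injOn_cos ⟨h24.1, by linarith [h24.2]⟩ ⟨le_refl 0, pip.le⟩
      (by rw [g24, Real.cos_zero])
  · rintro ⟨H12, H23, H34, H41, H24⟩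
    have sq12' : dist v₁ v₂ ^ 2 = r₁^2 + r₂^2 := by
      rw [sq12, H12, Real.cos_pi_div_two]; ring
    have sq14' : dist v₁ v₄ ^ 2 = r₁^2 + r₄^2 := by
      rw [sq14, H41, Real.cos_pi_div_two]; ring
    have sq32' : dist v₃ v₂ ^ 2 = r₃^2 + r₂^2 := by
      rw [sq32, H23, Real.cos_pi_div_two]; ring
    have sq34' : dist v₃ v₄ ^ 2 = r₃^2 + r₄^2 := by
      rw [sq34, H34, Real.cos_pi_div_two]; ring
    have sq24' : dist v₂ v₄ ^ 2 = (r₂ + r₄)^2 := by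
      rw [sq24, H24, Real.cos_zero]; ring
    have E1 := key_eq r₁ r₂ r₄ hr₁.le hr₂ hr₄ v₁ v₂ v₄ sq12' sq14' sq24'
    have E3 := key_eq r₃ r₂ r₄ hr₃.le hr₂ hr₄ v₃ v₂ v₄ sq32' sq34' sq24'
    have tri := dist_triangle v₁ ((1-(r₂/(r₂+r₄)))•v₂ + (r₂/(r₂+r₄))•v₄) v₃
    rw [E1] at tri
    rw [dist_comm ((1-(r₂/(r₂+r₄)))•v₂ + (r₂/(r₂+r₄))•v₄) v₃, E3] at tri
    linarith [lower, tri]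
end

section
/- Let $\Theta_i, \Theta_j, \Theta_k \in [0, \pi)$ satisfy the three inequalities $\cos\Theta_i + \cos\Theta_j \cos\Theta_k \geq 0$, $\cos\Theta_j + \cos\Theta_k \cos\Theta_i \geq 0$, and $\cos\Theta_k + \cos\Theta_i \cos\Theta_j \geq 0$. Then at least one of the following holds: (a) $\Theta_i + \Theta_j + \Theta_k \leq \pi$, or (b) all three inequalities $\Theta_i + \Theta_j < \pi + \Theta_k$, $\Theta_j + \Theta_k < \pi + \Theta_i$, $\Theta_k + \Theta_i < \pi + \Theta_j$ hold. -/
open Real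

lemma aux_z4 (Θi Θj Θk : ℝ)
    (hi : Θi ∈ Set.Ico 0 π) (hj : Θj ∈ Set.Ico 0 π) (hk : Θk ∈ Set.Ico 0 π)
    (c1 : 0 ≤ Real.cos Θi + Real.cos Θj * Real.cos Θk)
    (h : π + Θk ≤ Θi + Θj) : Θi + Θj + Θk ≤ π := by
  obtain ⟨hi0, hi1⟩ := hi
  obtain ⟨hj0, hj1⟩ := hj
  obtain ⟨hk0, hk1⟩ := hk
  have hkj : Θk < Θj := by linarith
  have key : Real.cos Θi ≤ Real.cos (π - (Θj - Θk)) := by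
    apply Real.cos_le_cos_of_nonneg_of_le_pi (by linarith) (by linarith) (by linarith)
  rw [Real.cos_pi_sub, Real.cos_sub] at key
  have hsk : 0 ≤ Real.sin Θk := Real.sin_nonneg_of_nonneg_of_le_pi hk0 hk1.le
  have hsj : 0 < Real.sin Θj := Real.sin_pos_of_pos_of_lt_pi (by linarith) hj1
  have hzero : Real.sin Θk = 0 := by nlinarith
  have hk0' : Θk = 0 := by
    rcases (Real.sin_eq_zero_iff_of_lt_of_lt (by linarith) hk1).mp hzero with h'
    exact h'
  subst hk0'
  by_contra hc
  push_neg at hc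
  have key2 : Real.cos Θi < Real.cos (π - Θj) := by
    apply Real.cos_lt_cos_of_nonneg_of_le_pi (by linarith) hi1.le (by linarith)
  rw [Real.cos_pi_sub] at key2
  simp [Real.cos_zero] at c1
  linarith

/-- Condition (Z₄) implies (sum ≤ π) or the strict triangle-type angle condition (Z₁). -/
theorem stmt_1 (Θi Θj Θk : ℝ)
    (hi : Θi ∈ Set.Ico 0 π) (hj : Θj ∈ Set.Ico 0 π) (hk : Θk ∈ Set.Ico 0 π)
    (c1 : 0 ≤ Real.cos Θi + Real.cos Θj * Real.cos Θk)
    (c2 : 0 ≤ Real.cos Θj + Real.cos Θk * Real.cos Θi)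
    (c3 : 0 ≤ Real.cos Θk + Real.cos Θi * Real.cos Θj) :
    Θi + Θj + Θk ≤ π ∨
      (Θi + Θj < π + Θk ∧ Θj + Θk < π + Θi ∧ Θk + Θi < π + Θj) := by
  by_cases h1 : Θi + Θj < π + Θk
  · by_cases h2 : Θj + Θk < π + Θi
    · by_cases h3 : Θk + Θi < π + Θj
      · exact Or.inr ⟨h1, h2, h3⟩
      · push_neg at h3
        exact Or.inl (by have := aux_z4 Θk Θi Θj hk hi hj c3 (by linarith); linarith)
    · push_neg at h2
      exact Or.inl (by have := aux_z4 Θj Θk Θi hj hk hi c2 (by linarith); linarith)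
  · push_neg at h1
    exact Or.inl (aux_z4 Θi Θj Θk hi hj hk c1 (by linarith))
end

section
/- Let $\Theta_i, \Theta_j, \Theta_k \in [0, \pi)$ satisfy $\Theta_i + \Theta_j + \Theta_k \leq \pi$. Then for any radii $r_i, r_j, r_k > 0$, the three Euclidean lengths $l_{ij} = \sqrt{r_i^2 + r_j^2 + 2 r_i r_j \cos\Theta_k}$, $l_{jk} = \sqrt{r_j^2 + r_k^2 + 2 r_j r_k \cos\Theta_i}$, $l_{ki} = \sqrt{r_k^2 + r_i^2 + 2 r_k r_i \cos\Theta_j}$ satisfy the strict triangle inequalities, i.e., each length is strictly less than the sum of the other two. -/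
open Real

private lemma tri_aux (X Y Z : ℝ) (hX : 0 < X) (hY : 0 < Y) (hZ : 0 < Z)
    (hE : X ^ 2 + Y ^ 2 + Z ^ 2 < 2 * X * Y + 2 * Y * Z + 2 * Z * X) :
    Real.sqrt X < Real.sqrt Y + Real.sqrt Z := by
  have hYZ : (0:ℝ) ≤ Y * Z := by positivity
  have hsq : Real.sqrt (Y * Z) ^ 2 = Y * Z := Real.sq_sqrt hYZ
  have hsn : 0 ≤ Real.sqrt (Y * Z) := Real.sqrt_nonneg _
  have h2 : X < Y + Z + 2 * Real.sqrt (Y * Z) := by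
    nlinarith [hsq, hsn, sq_nonneg (X - Y - Z - 2 * Real.sqrt (Y * Z)),
      sq_nonneg (X - Y - Z + 2 * Real.sqrt (Y * Z))]
  have hmul : Real.sqrt Y * Real.sqrt Z = Real.sqrt (Y * Z) :=
    (Real.sqrt_mul hY.le Z).symm
  have h3 : X < (Real.sqrt Y + Real.sqrt Z) ^ 2 := by
    have hy2 := Real.sq_sqrt hY.le
    have hz2 := Real.sq_sqrt hZ.le
    nlinarith [h2, hmul, hy2, hz2]
  calc Real.sqrt X < Real.sqrt ((Real.sqrt Y + Real.sqrt Z) ^ 2) :=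
        Real.sqrt_lt_sqrt hX.le h3
    _ = Real.sqrt Y + Real.sqrt Z := Real.sqrt_sq (by positivity)

private lemma key_aux (ri rj rk a b c u v w : ℝ)
    (hri : 0 < ri) (hrj : 0 < rj) (hrk : 0 < rk)
    (hu0 : 0 ≤ u) (hv0 : 0 ≤ v) (hw0 : 0 ≤ w)
    (hua : u ^ 2 = 1 - a ^ 2) (hvb : v ^ 2 = 1 - b ^ 2) (hwc : w ^ 2 = 1 - c ^ 2)
    (h1 : u * v ≤ c + a * b) (h2 : u * w ≤ b + a * c) (h3 : v * w ≤ a + b * c)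
    (hS : 0 < rj * rk * u + ri * rk * v + ri * rj * w) :
    (ri ^ 2 + rj ^ 2 + 2 * ri * rj * c) ^ 2 + (rj ^ 2 + rk ^ 2 + 2 * rj * rk * a) ^ 2 +
        (rk ^ 2 + ri ^ 2 + 2 * rk * ri * b) ^ 2 <
      2 * (ri ^ 2 + rj ^ 2 + 2 * ri * rj * c) * (rj ^ 2 + rk ^ 2 + 2 * rj * rk * a) +
        2 * (rj ^ 2 + rk ^ 2 + 2 * rj * rk * a) * (rk ^ 2 + ri ^ 2 + 2 * rk * ri * b) +
        2 * (rk ^ 2 + ri ^ 2 + 2 * rk * ri * b) * (ri ^ 2 + rj ^ 2 + 2 * ri * rj * c) := by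
  have hid : 2 * (ri ^ 2 + rj ^ 2 + 2 * ri * rj * c) * (rj ^ 2 + rk ^ 2 + 2 * rj * rk * a) +
        2 * (rj ^ 2 + rk ^ 2 + 2 * rj * rk * a) * (rk ^ 2 + ri ^ 2 + 2 * rk * ri * b) +
        2 * (rk ^ 2 + ri ^ 2 + 2 * rk * ri * b) * (ri ^ 2 + rj ^ 2 + 2 * ri * rj * c) -
        ((ri ^ 2 + rj ^ 2 + 2 * ri * rj * c) ^ 2 + (rj ^ 2 + rk ^ 2 + 2 * rj * rk * a) ^ 2 +
          (rk ^ 2 + ri ^ 2 + 2 * rk * ri * b) ^ 2) =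
      4 * ((rj * rk * u + ri * rk * v + ri * rj * w) ^ 2 +
        2 * ri * rj * rk * (rk * (c + a * b - u * v) + rj * (b + a * c - u * w) +
          ri * (a + b * c - v * w))) := by
    linear_combination (-4 * rj ^ 2 * rk ^ 2) * hua + (-4 * ri ^ 2 * rk ^ 2) * hvb +
      (-4 * ri ^ 2 * rj ^ 2) * hwc
  have hSq : 0 < (rj * rk * u + ri * rk * v + ri * rj * w) ^ 2 := pow_pos hS 2
  have m1 : 0 ≤ c + a * b - u * v := by linarith
  have m2 : 0 ≤ b + a * c - u * w := by linarith
  have m3 : 0 ≤ a + b * c - v * w := by linarith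
  have hM : 0 ≤ 2 * ri * rj * rk * (rk * (c + a * b - u * v) + rj * (b + a * c - u * w) +
      ri * (a + b * c - v * w)) :=
    mul_nonneg (by positivity)
      (add_nonneg (add_nonneg (mul_nonneg hrk.le m1) (mul_nonneg hrj.le m2))
        (mul_nonneg hri.le m3))
  linarith

/-- Euclidean three-circle configuration lemma, case `Θi + Θj + Θk ≤ π`:
the three center distances satisfy the strict triangle inequalities. -/
theorem stmt_3 (Θi Θj Θk : ℝ)
    (hi : Θi ∈ Set.Ico 0 π) (hj : Θj ∈ Set.Ico 0 π) (hk : Θk ∈ Set.Ico 0 π)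
    (hsum : Θi + Θj + Θk ≤ π)
    (ri rj rk : ℝ) (hri : 0 < ri) (hrj : 0 < rj) (hrk : 0 < rk) :
    Real.sqrt (ri ^ 2 + rj ^ 2 + 2 * ri * rj * Real.cos Θk) <
        Real.sqrt (rj ^ 2 + rk ^ 2 + 2 * rj * rk * Real.cos Θi) +
          Real.sqrt (rk ^ 2 + ri ^ 2 + 2 * rk * ri * Real.cos Θj) ∧
      Real.sqrt (rj ^ 2 + rk ^ 2 + 2 * rj * rk * Real.cos Θi) <
        Real.sqrt (rk ^ 2 + ri ^ 2 + 2 * rk * ri * Real.cos Θj) +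
          Real.sqrt (ri ^ 2 + rj ^ 2 + 2 * ri * rj * Real.cos Θk) ∧
      Real.sqrt (rk ^ 2 + ri ^ 2 + 2 * rk * ri * Real.cos Θj) <
        Real.sqrt (ri ^ 2 + rj ^ 2 + 2 * ri * rj * Real.cos Θk) +
          Real.sqrt (rj ^ 2 + rk ^ 2 + 2 * rj * rk * Real.cos Θi) := by
  obtain ⟨hi0, hiπ⟩ := hi
  obtain ⟨hj0, hjπ⟩ := hj
  obtain ⟨hk0, hkπ⟩ := hk
  have han : -1 < Real.cos Θi := by
    have := Real.cos_lt_cos_of_nonneg_of_le_pi hi0 le_rfl hiπ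
    simpa [Real.cos_pi] using this
  have hbn : -1 < Real.cos Θj := by
    have := Real.cos_lt_cos_of_nonneg_of_le_pi hj0 le_rfl hjπ
    simpa [Real.cos_pi] using this
  have hcn : -1 < Real.cos Θk := by
    have := Real.cos_lt_cos_of_nonneg_of_le_pi hk0 le_rfl hkπ
    simpa [Real.cos_pi] using this
  have hX0 : 0 < ri ^ 2 + rj ^ 2 + 2 * ri * rj * Real.cos Θk := by
    have h := mul_pos (mul_pos hri hrj) (by linarith : (0:ℝ) < Real.cos Θk + 1)
    nlinarith [sq_nonneg (ri - rj)]
  have hY0 : 0 < rj ^ 2 + rk ^ 2 + 2 * rj * rk * Real.cos Θi := by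
    have h := mul_pos (mul_pos hrj hrk) (by linarith : (0:ℝ) < Real.cos Θi + 1)
    nlinarith [sq_nonneg (rj - rk)]
  have hZ0 : 0 < rk ^ 2 + ri ^ 2 + 2 * rk * ri * Real.cos Θj := by
    have h := mul_pos (mul_pos hrk hri) (by linarith : (0:ℝ) < Real.cos Θj + 1)
    nlinarith [sq_nonneg (rk - ri)]
  have key : (ri ^ 2 + rj ^ 2 + 2 * ri * rj * Real.cos Θk) ^ 2 +
        (rj ^ 2 + rk ^ 2 + 2 * rj * rk * Real.cos Θi) ^ 2 +
        (rk ^ 2 + ri ^ 2 + 2 * rk * ri * Real.cos Θj) ^ 2 <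
      2 * (ri ^ 2 + rj ^ 2 + 2 * ri * rj * Real.cos Θk) *
          (rj ^ 2 + rk ^ 2 + 2 * rj * rk * Real.cos Θi) +
        2 * (rj ^ 2 + rk ^ 2 + 2 * rj * rk * Real.cos Θi) *
          (rk ^ 2 + ri ^ 2 + 2 * rk * ri * Real.cos Θj) +
        2 * (rk ^ 2 + ri ^ 2 + 2 * rk * ri * Real.cos Θj) *
          (ri ^ 2 + rj ^ 2 + 2 * ri * rj * Real.cos Θk) := by
    by_cases hzero : Θi = 0 ∧ Θj = 0 ∧ Θk = 0
    · obtain ⟨e1, e2, e3⟩ := hzero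
      rw [e1, e2, e3, Real.cos_zero]
      have hid : 2 * (ri ^ 2 + rj ^ 2 + 2 * ri * rj * 1) * (rj ^ 2 + rk ^ 2 + 2 * rj * rk * 1) +
            2 * (rj ^ 2 + rk ^ 2 + 2 * rj * rk * 1) * (rk ^ 2 + ri ^ 2 + 2 * rk * ri * 1) +
            2 * (rk ^ 2 + ri ^ 2 + 2 * rk * ri * 1) * (ri ^ 2 + rj ^ 2 + 2 * ri * rj * 1) -
            ((ri ^ 2 + rj ^ 2 + 2 * ri * rj * 1) ^ 2 + (rj ^ 2 + rk ^ 2 + 2 * rj * rk * 1) ^ 2 +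
              (rk ^ 2 + ri ^ 2 + 2 * rk * ri * 1) ^ 2) =
          16 * ri * rj * rk * (ri + rj + rk) := by ring
      have hpos : (0:ℝ) < 16 * ri * rj * rk * (ri + rj + rk) := by positivity
      linarith
    · have hu0 : 0 ≤ Real.sin Θi := Real.sin_nonneg_of_nonneg_of_le_pi hi0 hiπ.le
      have hv0 : 0 ≤ Real.sin Θj := Real.sin_nonneg_of_nonneg_of_le_pi hj0 hjπ.le
      have hw0 : 0 ≤ Real.sin Θk := Real.sin_nonneg_of_nonneg_of_le_pi hk0 hkπ.le
      have h1 : Real.sin Θi * Real.sin Θj ≤ Real.cos Θk + Real.cos Θi * Real.cos Θj := by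
        have hle : Θk ≤ π - (Θi + Θj) := by linarith
        have := Real.cos_le_cos_of_nonneg_of_le_pi hk0 (by linarith) hle
        rw [Real.cos_pi_sub, Real.cos_add] at this
        linarith
      have h2 : Real.sin Θi * Real.sin Θk ≤ Real.cos Θj + Real.cos Θi * Real.cos Θk := by
        have hle : Θj ≤ π - (Θi + Θk) := by linarith
        have := Real.cos_le_cos_of_nonneg_of_le_pi hj0 (by linarith) hle
        rw [Real.cos_pi_sub, Real.cos_add] at this
        linarith
      have h3 : Real.sin Θj * Real.sin Θk ≤ Real.cos Θi + Real.cos Θj * Real.cos Θk := by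
        have hle : Θi ≤ π - (Θj + Θk) := by linarith
        have := Real.cos_le_cos_of_nonneg_of_le_pi hi0 (by linarith) hle
        rw [Real.cos_pi_sub, Real.cos_add] at this
        linarith
      have hS : 0 < rj * rk * Real.sin Θi + ri * rk * Real.sin Θj + ri * rj * Real.sin Θk := by
        have hpos : 0 < Real.sin Θi ∨ 0 < Real.sin Θj ∨ 0 < Real.sin Θk := by
          by_contra hcon
          push_neg at hcon
          obtain ⟨n1, n2, n3⟩ := hcon
          refine hzero ⟨?_, ?_, ?_⟩
          · exact (Real.sin_eq_zero_iff_of_lt_of_lt (by linarith [Real.pi_pos]) hiπ).1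
              (le_antisymm n1 hu0)
          · exact (Real.sin_eq_zero_iff_of_lt_of_lt (by linarith [Real.pi_pos]) hjπ).1
              (le_antisymm n2 hv0)
          · exact (Real.sin_eq_zero_iff_of_lt_of_lt (by linarith [Real.pi_pos]) hkπ).1
              (le_antisymm n3 hw0)
        have t1 : 0 ≤ rj * rk * Real.sin Θi := by positivity
        have t2 : 0 ≤ ri * rk * Real.sin Θj := by positivity
        have t3 : 0 ≤ ri * rj * Real.sin Θk := by positivity
        rcases hpos with h | h | h
        · have := mul_pos (mul_pos hrj hrk) h; linarith
        · have := mul_pos (mul_pos hri hrk) h; linarith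
        · have := mul_pos (mul_pos hri hrj) h; linarith
      exact key_aux ri rj rk (Real.cos Θi) (Real.cos Θj) (Real.cos Θk)
        (Real.sin Θi) (Real.sin Θj) (Real.sin Θk) hri hrj hrk hu0 hv0 hw0
        (Real.sin_sq Θi) (Real.sin_sq Θj)
        (Real.sin_sq Θk) h1 h2 h3 hS
  exact ⟨tri_aux _ _ _ hX0 hY0 hZ0 (by linarith),
    tri_aux _ _ _ hY0 hZ0 hX0 (by linarith),
    tri_aux _ _ _ hZ0 hX0 hY0 (by linarith)⟩
end

section
/- Let $\Theta_i, \Theta_j, \Theta_k \in [0, \pi)$ satisfy the three strict inequalities $\Theta_i + \Theta_j < \pi + \Theta_k$, $\Theta_j + \Theta_k < \pi + \Theta_i$, and $\Theta_k + \Theta_i < \pi + \Theta_j$. Then for any radii $r_i, r_j, r_k > 0$, the lengths $l_{ij} = \sqrt{r_i^2 + r_j^2 + 2 r_i r_j \cos\Theta_k}$, $l_{jk} = \sqrt{r_j^2 + r_k^2 + 2 r_j r_k \cos\Theta_i}$, $l_{ki} = \sqrt{r_k^2 + r_i^2 + 2 r_k r_i \cos\Theta_j}$ satisfy the strict triangle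 inequalities. -/
open Real

set_option maxHeartbeats 1000000

private lemma key_tri (Θi Θj Θk : ℝ)
    (hi : Θi ∈ Set.Ico 0 π) (hj : Θj ∈ Set.Ico 0 π) (hk : Θk ∈ Set.Ico 0 π)
    (h1 : Θi + Θj < π + Θk)
    (ri rj rk : ℝ) (hri : 0 < ri) (hrj : 0 < rj) (hrk : 0 < rk) :
    Real.sqrt (ri ^ 2 + rj ^ 2 + 2 * ri * rj * Real.cos Θk) <
        Real.sqrt (rj ^ 2 + rk ^ 2 + 2 * rj * rk * Real.cos Θi) +
          Real.sqrt (rk ^ 2 + ri ^ 2 + 2 * rk * ri * Real.cos Θj) := by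
  obtain ⟨hi0, hi1⟩ := hi
  obtain ⟨hj0, hj1⟩ := hj
  obtain ⟨hk0, hk1⟩ := hk
  have hck1 : Real.cos Θk ≤ 1 := Real.cos_le_one _
  have hLnn : 0 ≤ ri ^ 2 + rj ^ 2 + 2 * ri * rj * Real.cos Θk := by
    nlinarith [Real.neg_one_le_cos Θk, sq_nonneg (ri - rj), mul_pos hri hrj]
  rcases le_or_gt (Θi + Θj) π with hcase | hcase
  · -- Case A: Θi + Θj ≤ π
    have hL : Real.sqrt (ri ^ 2 + rj ^ 2 + 2 * ri * rj * Real.cos Θk) ≤ ri + rj := by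
      have h := Real.sqrt_le_sqrt (show ri ^ 2 + rj ^ 2 + 2 * ri * rj * Real.cos Θk
          ≤ (ri + rj) ^ 2 by nlinarith [mul_pos hri hrj])
      rwa [Real.sqrt_sq (by positivity)] at h
    have hA : rj + rk * Real.cos Θi ≤ Real.sqrt (rj ^ 2 + rk ^ 2 + 2 * rj * rk * Real.cos Θi) := by
      have h := Real.sqrt_le_sqrt (show (rj + rk * Real.cos Θi) ^ 2
          ≤ rj ^ 2 + rk ^ 2 + 2 * rj * rk * Real.cos Θi by
        nlinarith [Real.sin_sq_add_cos_sq Θi, sq_nonneg (rk * Real.sin Θi)])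
      rw [Real.sqrt_sq_eq_abs] at h
      exact (le_abs_self _).trans h
    have hB : ri + rk * Real.cos Θj ≤ Real.sqrt (rk ^ 2 + ri ^ 2 + 2 * rk * ri * Real.cos Θj) := by
      have h := Real.sqrt_le_sqrt (show (ri + rk * Real.cos Θj) ^ 2
          ≤ rk ^ 2 + ri ^ 2 + 2 * rk * ri * Real.cos Θj by
        nlinarith [Real.sin_sq_add_cos_sq Θj, sq_nonneg (rk * Real.sin Θj)])
      rw [Real.sqrt_sq_eq_abs] at h
      exact (le_abs_self _).trans h
    rcases lt_or_eq_of_le hcase with hlt | heq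
    · -- Θi + Θj < π : cos Θj > -cos Θi strictly
      have hc : Real.cos (π - Θi) < Real.cos Θj :=
        Real.cos_lt_cos_of_nonneg_of_le_pi hj0 (by linarith) (by linarith)
      rw [Real.cos_pi_sub] at hc
      calc Real.sqrt (ri ^ 2 + rj ^ 2 + 2 * ri * rj * Real.cos Θk) ≤ ri + rj := hL
        _ < (rj + rk * Real.cos Θi) + (ri + rk * Real.cos Θj) := by nlinarith
        _ ≤ _ := add_le_add hA hB
    · -- Θi + Θj = π : Θi ∈ (0,π), strict bound on first sqrt
      have hipos : 0 < Θi := by linarith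
      have hsin : 0 < Real.sin Θi := Real.sin_pos_of_pos_of_lt_pi hipos hi1
      have hA' : rj + rk * Real.cos Θi
          < Real.sqrt (rj ^ 2 + rk ^ 2 + 2 * rj * rk * Real.cos Θi) := by
        have h := Real.sqrt_lt_sqrt (sq_nonneg (rj + rk * Real.cos Θi))
          (show (rj + rk * Real.cos Θi) ^ 2
            < rj ^ 2 + rk ^ 2 + 2 * rj * rk * Real.cos Θi by
          nlinarith [Real.sin_sq_add_cos_sq Θi, mul_pos hrk hsin])
        rw [Real.sqrt_sq_eq_abs] at h
        exact lt_of_le_of_lt (le_abs_self _) h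
      have hcj : Real.cos Θj = -Real.cos Θi := by
        rw [show Θj = π - Θi by linarith, Real.cos_pi_sub]
      rw [hcj] at hB ⊢
      linarith
  · -- Case B: Θi + Θj > π
    set a := rk + rj * Real.cos Θi with ha
    set b := rj * Real.sin Θi with hb
    set c := rk + ri * Real.cos Θj with hc
    set d := ri * Real.sin Θj with hd
    have hipos : 0 < Θi := by linarith
    have hsin : 0 < Real.sin Θi := Real.sin_pos_of_pos_of_lt_pi hipos hi1
    have hAeq : rj ^ 2 + rk ^ 2 + 2 * rj * rk * Real.cos Θi = a ^ 2 + b ^ 2 := by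
      rw [ha, hb]; linear_combination (-(rj ^ 2)) * Real.sin_sq_add_cos_sq Θi
    have hBeq : rk ^ 2 + ri ^ 2 + 2 * rk * ri * Real.cos Θj = c ^ 2 + d ^ 2 := by
      rw [hc, hd]; linear_combination (-(ri ^ 2)) * Real.sin_sq_add_cos_sq Θj
    have hAnn : (0:ℝ) ≤ a ^ 2 + b ^ 2 := by positivity
    have hBnn : (0:ℝ) ≤ c ^ 2 + d ^ 2 := by positivity
    have hApos : (0:ℝ) < a ^ 2 + b ^ 2 := by
      have : 0 < b := mul_pos hrj hsin
      positivity
    -- Cauchy–Schwarz : b*d - a*c ≤ sqrt(a²+b²) * sqrt(c²+d²)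
    have hcs : b * d - a * c ≤ Real.sqrt (a ^ 2 + b ^ 2) * Real.sqrt (c ^ 2 + d ^ 2) := by
      rw [← Real.sqrt_mul hAnn]
      have h := Real.sqrt_le_sqrt (show (a * c - b * d) ^ 2 ≤ (a ^ 2 + b ^ 2) * (c ^ 2 + d ^ 2) by
        linarith [sq_nonneg (a * d + b * c), sq_nonneg (a * c - b * d)])
      rw [Real.sqrt_sq_eq_abs] at h
      calc b * d - a * c ≤ |a * c - b * d| := by
            rw [abs_sub_comm]; exact le_abs_self _
        _ ≤ _ := h
    -- cos Θk < cos (Θi + Θj - π) = -cos(Θi+Θj)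
    have hck : Real.cos Θk < -(Real.cos Θi * Real.cos Θj - Real.sin Θi * Real.sin Θj) := by
      have h := Real.cos_lt_cos_of_nonneg_of_le_pi (x := Θi + Θj - π) (y := Θk)
        (by linarith) (le_of_lt hk1) (by linarith)
      rw [Real.cos_sub_pi, Real.cos_add] at h
      linarith
    have hsum : 0 < Real.sqrt (a ^ 2 + b ^ 2) + Real.sqrt (c ^ 2 + d ^ 2) := by
      have := Real.sqrt_pos.mpr hApos
      have := Real.sqrt_nonneg (c ^ 2 + d ^ 2)
      linarith
    have hkey : ri ^ 2 + rj ^ 2 + 2 * ri * rj * Real.cos Θk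
        < (Real.sqrt (a ^ 2 + b ^ 2) + Real.sqrt (c ^ 2 + d ^ 2)) ^ 2 := by
      have hsqA : Real.sqrt (a ^ 2 + b ^ 2) ^ 2 = a ^ 2 + b ^ 2 := Real.sq_sqrt hAnn
      have hsqB : Real.sqrt (c ^ 2 + d ^ 2) ^ 2 = c ^ 2 + d ^ 2 := Real.sq_sqrt hBnn
      have hid : ri ^ 2 + rj ^ 2
          - 2 * ri * rj * (Real.cos Θi * Real.cos Θj - Real.sin Θi * Real.sin Θj)
          = (a ^ 2 + b ^ 2) + (c ^ 2 + d ^ 2) + 2 * (b * d - a * c) := by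
        rw [ha, hb, hc, hd]
        linear_combination (-(ri ^ 2)) * Real.sin_sq_add_cos_sq Θj + (-(rj ^ 2)) * Real.sin_sq_add_cos_sq Θi
      nlinarith [mul_pos hri hrj, hcs]
    rw [hAeq, hBeq]
    have := (Real.sqrt_lt' hsum).mpr hkey
    exact this

/-- Euclidean three-circle configuration lemma, case `Θi + Θj + Θk ≤ π`:
the three center distances satisfy the strict triangle inequalities. -/
theorem stmt_4 (Θi Θj Θk : ℝ)
    (hi : Θi ∈ Set.Ico 0 π) (hj : Θj ∈ Set.Ico 0 π) (hk : Θk ∈ Set.Ico 0 π)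
    (h1 : Θi + Θj < π + Θk) (h2 : Θj + Θk < π + Θi) (h3 : Θk + Θi < π + Θj)
    (ri rj rk : ℝ) (hri : 0 < ri) (hrj : 0 < rj) (hrk : 0 < rk) :
    Real.sqrt (ri ^ 2 + rj ^ 2 + 2 * ri * rj * Real.cos Θk) <
        Real.sqrt (rj ^ 2 + rk ^ 2 + 2 * rj * rk * Real.cos Θi) +
          Real.sqrt (rk ^ 2 + ri ^ 2 + 2 * rk * ri * Real.cos Θj) ∧
      Real.sqrt (rj ^ 2 + rk ^ 2 + 2 * rj * rk * Real.cos Θi) <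
        Real.sqrt (rk ^ 2 + ri ^ 2 + 2 * rk * ri * Real.cos Θj) +
          Real.sqrt (ri ^ 2 + rj ^ 2 + 2 * ri * rj * Real.cos Θk) ∧
      Real.sqrt (rk ^ 2 + ri ^ 2 + 2 * rk * ri * Real.cos Θj) <
        Real.sqrt (ri ^ 2 + rj ^ 2 + 2 * ri * rj * Real.cos Θk) +
          Real.sqrt (rj ^ 2 + rk ^ 2 + 2 * rj * rk * Real.cos Θi) := by
  exact ⟨key_tri Θi Θj Θk hi hj hk h1 ri rj rk hri hrj hrk,
    key_tri Θj Θk Θi hj hk hi h2 rj rk ri hrj hrk hri,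
    key_tri Θk Θi Θj hk hi hj h3 rk ri rj hrk hri hrj⟩
end

section
/- Let $\Theta \in [0, \pi)$ be fixed and let $0 < r_0 < 1$. For $r > 0$ define $d(r) = \sqrt{r_0^2 + r^2 + 2 r_0 r \cos\Theta}$ and suppose $d(r) + r < 1$. Let $g(r) = \coth\left(\operatorname{artanh}(d(r) + r) - \operatorname{artanh}(d(r) - r)\right)$ be the geodesic curvature of the hyperbolic circle corresponding to the Euclidean circle of radius $r$ centered at distance $d(r)$ from the origin. Then $g'(r) < 0$. -/
open Real

/-- Inverse hyperbolic tangent. -/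
noncomputable def artanh (x : ℝ) : ℝ := (1 / 2) * Real.log ((1 + x) / (1 - x))

/-!
Since `tanh (artanh x) = x`, the subtraction formulas give
`coth (artanh a - artanh b) = (1 - a b) / (a - b)`. For `a = d + r`, `b = d - r` with
`d² = r₀² + r² + 2 r₀ r cos Θ` this is `g(r) = (1 - r₀²) / (2 r) - r₀ cos Θ`, whose derivative
`-(1 - r₀²) / (2 r²)` is negative because `|r₀| ≤ d + r < 1` by the triangle inequality.
-/

theorem artanh_eq_real_artanh {x : ℝ} (hx : x ∈ Set.Icc (-1) 1) :
    _root_.artanh x = Real.artanh x :=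
  (Real.artanh_eq_half_log hx).symm

theorem cosh_sub_div_sinh_sub (x y : ℝ) :
    cosh (x - y) / sinh (x - y) = (1 - tanh x * tanh y) / (tanh x - tanh y) := by
  have hx := (cosh_pos x).ne'
  have hy := (cosh_pos y).ne'
  rw [cosh_sub, sinh_sub, tanh_eq_sinh_div_cosh, tanh_eq_sinh_div_cosh]
  field_simp

theorem cosh_div_sinh_artanh_sub {a b : ℝ} (ha : a ∈ Set.Ioo (-1) 1) (hb : b ∈ Set.Ioo (-1) 1) :
    cosh (_root_.artanh a - _root_.artanh b) / sinh (_root_.artanh a - _root_.artanh b) =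
      (1 - a * b) / (a - b) := by
  rw [artanh_eq_real_artanh (Set.Ioo_subset_Icc_self ha),
    artanh_eq_real_artanh (Set.Ioo_subset_Icc_self hb), cosh_sub_div_sinh_sub,
    Real.tanh_artanh ha, Real.tanh_artanh hb]

/-- The paper's `d(r)`: by the law of cosines, the distance from the origin to a point at
distance `r` from a point of norm `r₀`, the angle at the latter being `π - Θ`. -/
noncomputable def centerDist (Θ r₀ r : ℝ) : ℝ :=
  √(r₀ ^ 2 + r ^ 2 + 2 * r₀ * r * cos Θ)

theorem sq_centerDist (Θ r₀ r : ℝ) :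
    centerDist Θ r₀ r ^ 2 = r₀ ^ 2 + r ^ 2 + 2 * r₀ * r * cos Θ := by
  refine sq_sqrt ?_
  nlinarith [neg_one_le_cos Θ, cos_le_one Θ, sq_nonneg (r₀ - r), sq_nonneg (r₀ + r)]

theorem abs_le_centerDist_add (Θ r₀ : ℝ) {r : ℝ} (hr : 0 ≤ r) :
    |r₀| ≤ centerDist Θ r₀ r + r := by
  have h : |(|r₀| - r)| ≤ centerDist Θ r₀ r := by
    have hcos : -|r₀| ≤ r₀ * cos Θ := calc
      -|r₀| ≤ -|r₀ * cos Θ| := by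
        rw [abs_mul]; exact neg_le_neg (mul_le_of_le_one_right (abs_nonneg _) (abs_cos_le_one Θ))
      _ ≤ r₀ * cos Θ := neg_abs_le _
    refine abs_le_sqrt ?_
    nlinarith [mul_nonneg hr (neg_le_iff_add_nonneg.mp hcos), sq_abs r₀]
  linarith [le_abs_self (|r₀| - r)]

theorem coth_artanh_centerDist {Θ r₀ r : ℝ} (hr : 0 < r) (h : centerDist Θ r₀ r + r < 1) :
    cosh (_root_.artanh (centerDist Θ r₀ r + r) - _root_.artanh (centerDist Θ r₀ r - r)) /
        sinh (_root_.artanh (centerDist Θ r₀ r + r) - _root_.artanh (centerDist Θ r₀ r - r)) =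
      (1 - r₀ ^ 2) / (2 * r) - r₀ * cos Θ := by
  have hd : 0 ≤ centerDist Θ r₀ r := sqrt_nonneg _
  rw [cosh_div_sinh_artanh_sub ⟨by linarith, h⟩ ⟨by linarith, by linarith⟩,
    show centerDist Θ r₀ r + r - (centerDist Θ r₀ r - r) = 2 * r by ring]
  field_simp
  linear_combination -sq_centerDist Θ r₀ r

theorem stmt_7_general (Θ r₀ : ℝ) :
    let d : ℝ → ℝ := fun r => Real.sqrt (r₀ ^ 2 + r ^ 2 + 2 * r₀ * r * Real.cos Θ)
    let g : ℝ → ℝ := fun r =>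
      Real.cosh (_root_.artanh (d r + r) - _root_.artanh (d r - r)) /
        Real.sinh (_root_.artanh (d r + r) - _root_.artanh (d r - r))
    ∀ r : ℝ, 0 < r → d r + r < 1 → deriv g r < 0 := by
  intro d g r hr hlt
  change centerDist Θ r₀ r + r < 1 at hlt
  have hcont : Continuous fun s => centerDist Θ r₀ s + s := by
    unfold centerDist; fun_prop
  have hg : g =ᶠ[nhds r] fun s => (1 - r₀ ^ 2) / (2 * s) - r₀ * cos Θ := by
    filter_upwards [eventually_gt_nhds hr, hcont.continuousAt.eventually_lt continuousAt_const hlt]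
      with s hs hs1
    exact coth_artanh_centerDist hs hs1
  have hderiv : HasDerivAt (fun s => (1 - r₀ ^ 2) / (2 * s) - r₀ * cos Θ)
      (-((1 - r₀ ^ 2) / 2) / r ^ 2) r := by
    have := ((hasDerivAt_inv hr.ne').const_mul ((1 - r₀ ^ 2) / 2)).sub_const (r₀ * cos Θ)
    exact (this.congr_deriv (by ring)).congr_of_eventuallyEq (.of_forall fun s => by ring)
  have hr₀ : r₀ ^ 2 < 1 :=
    (sq_lt_one_iff_abs_lt_one r₀).mpr ((abs_le_centerDist_add Θ r₀ hr.le).trans_lt hlt)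
  rw [hg.deriv_eq, hderiv.deriv]
  exact div_neg_of_neg_of_pos (by linarith) (by positivity)

/-- In the hyperbolic-circle regime, the geodesic curvature
`g(r) = coth(artanh(d(r)+r) - artanh(d(r)-r))` has negative derivative. -/
theorem stmt_7 (Θ r₀ : ℝ) (hΘ : Θ ∈ Set.Ico 0 π) (hr₀ : 0 < r₀) (hr₀1 : r₀ < 1) :
    let d : ℝ → ℝ := fun r => Real.sqrt (r₀ ^ 2 + r ^ 2 + 2 * r₀ * r * Real.cos Θ)
    let g : ℝ → ℝ := fun r =>
      Real.cosh (_root_.artanh (d r + r) - _root_.artanh (d r - r)) /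
        Real.sinh (_root_.artanh (d r + r) - _root_.artanh (d r - r))
    ∀ r : ℝ, 0 < r → d r + r < 1 → deriv g r < 0 :=
  stmt_7_general Θ r₀
end

section
/- Let $G = (V, E)$ be an infinite graph and let $\Gamma(V_1, V_2)$ denote the set of paths (viewed as subsets of $V$) joining two nonempty disjoint vertex sets $V_1, V_2$. Let $V_1, V_2, \ldots, V_{2m}$ be mutually disjoint nonempty vertex subsets such that for all $i_1 < i_2 < i_3$, every path from $V_{i_1}$ to $V_{i_3}$ meets $V_{i_2}$. Then the vertex extremal lengths satisfy the superadditivity $\operatorname{VEL}(V_1, V_{2m}) \geq \sum_{k=1}^{m} \operatorname{VEL}(V_{2k-1}, V_{2k})$. -/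
/-!
Call a path from `W (2k-1)` to `W (2k)` that meets the sets `W j` only at its endpoints a direct
path of the `k`-th gap. Every path from `W 1` to `W (2m)` contains a direct path of each gap (a
shortest subwalk between the two sets; separation excludes the other `W j` from its interior),
and direct paths of different gaps `k < k'` are vertex-disjoint: splicing them at a common vertex
gives a walk from `W (2k-1)` to `W (2k')` that misses `W (2k)`. Hence admissible metrics `ν_k` of
the gaps, cut down to the union of their direct paths, have disjoint supports and are each
admissible for the paths from `W 1` to `W (2m)`, and `∑ c_k ν_k` with `c_k ∝ 1 / area ν_k` is
admissible with area `(∑ 1 / area ν_k)⁻¹`.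
-/

open scoped ENNReal

/-- The family of paths (viewed as vertex sets, namely supports of walks) joining `V₁` and
`V₂` in the graph `G`. -/
def pathFamily {V : Type*} (G : SimpleGraph V) (V₁ V₂ : Set V) : Set (Set V) :=
  {S | ∃ (u v : V) (w : G.Walk u v), u ∈ V₁ ∧ v ∈ V₂ ∧ S = {x | x ∈ w.support}}

/-- The area of a vertex metric. -/
noncomputable def vArea {V : Type*} (ν : V → ℝ≥0∞) : ℝ≥0∞ := ∑' v, ν v ^ 2

/-- A vertex metric is admissible for a family of vertex sets if every member has
length at least one. -/
def vAdmissible {V : Type*} (A : Set (Set V)) (ν : V → ℝ≥0∞) : Prop :=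
  ∀ α ∈ A, 1 ≤ ∑' x : α, ν x

/-- The vertex modulus of a family of vertex sets. -/
noncomputable def MOD {V : Type*} (A : Set (Set V)) : ℝ≥0∞ :=
  ⨅ (ν : V → ℝ≥0∞) (_ : vAdmissible A ν), vArea ν

/-- The vertex extremal length of a family of vertex sets. -/
noncomputable def VEL {V : Type*} (A : Set (Set V)) : ℝ≥0∞ := (MOD A)⁻¹


theorem sq_sum_eq_sum_sq_of_pairwise_mul_eq_zero {ι R : Type*} [CommSemiring R] {s : Finset ι}
    {f : ι → R} (h : (s : Set ι).Pairwise fun i j => f i * f j = 0) :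
    (∑ i ∈ s, f i) ^ 2 = ∑ i ∈ s, f i ^ 2 := by
  rw [sq, Finset.sum_mul_sum]
  refine Finset.sum_congr rfl fun i hi => ?_
  rw [Finset.sum_eq_single_of_mem i hi fun j hj hji => h hi hj hji.symm, sq]

section Modulus

variable {V : Type*}

theorem MOD_le_vArea {A : Set (Set V)} {ν : V → ℝ≥0∞} (hν : vAdmissible A ν) :
    MOD A ≤ vArea ν :=
  iInf₂_le ν hν

theorem MOD_mono {A B : Set (Set V)} (h : A ⊆ B) : MOD A ≤ MOD B :=
  le_iInf₂ fun _ hν => MOD_le_vArea fun α hα => hν α (h hα)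

theorem VEL_anti {A B : Set (Set V)} (h : A ⊆ B) : VEL B ≤ VEL A :=
  ENNReal.inv_le_inv.2 (MOD_mono h)

theorem vArea_smul (c : ℝ≥0∞) (ν : V → ℝ≥0∞) : vArea (c • ν) = c ^ 2 * vArea ν := by
  simp only [vArea, Pi.smul_apply, smul_eq_mul, mul_pow, ENNReal.tsum_mul_left]

theorem vArea_indicator_le (R : Set V) (ν : V → ℝ≥0∞) : vArea (R.indicator ν) ≤ vArea ν :=
  ENNReal.tsum_le_tsum fun x => pow_le_pow_left₀ zero_le (Set.indicator_le_self R ν x) 2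

theorem vArea_sum_of_pairwiseDisjoint {ι : Type*} {s : Finset ι} {ν : ι → V → ℝ≥0∞}
    (h : (s : Set ι).PairwiseDisjoint fun k => Function.support (ν k)) :
    vArea (∑ k ∈ s, ν k) = ∑ k ∈ s, vArea (ν k) := by
  have hsq : ∀ x, (∑ k ∈ s, ν k x) ^ 2 = ∑ k ∈ s, ν k x ^ 2 := fun x =>
    sq_sum_eq_sum_sq_of_pairwise_mul_eq_zero fun i hi j hj hij => by
      by_contra hx
      exact Set.disjoint_left.1 (h hi hj hij) (left_ne_zero_of_mul hx) (right_ne_zero_of_mul hx)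
  simp only [vArea, Finset.sum_apply, hsq]
  exact Summable.tsum_finsetSum fun _ _ => ENNReal.summable

theorem vAdmissible_indicator_sUnion {A Γ : Set (Set V)} {ν : V → ℝ≥0∞} (hν : vAdmissible A ν)
    (hΓ : ∀ γ ∈ Γ, ∃ α ∈ A, α ⊆ γ) : vAdmissible Γ ((⋃₀ A).indicator ν) := by
  intro γ hγ
  obtain ⟨α, hα, hαγ⟩ := hΓ γ hγ
  calc 1 ≤ ∑' x : α, ν x := hν α hα
    _ = ∑' x : α, (⋃₀ A).indicator ν x :=
      tsum_congr fun x => (Set.indicator_of_mem (Set.mem_sUnion_of_mem x.2 hα) ν).symm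
    _ ≤ ∑' x : γ, (⋃₀ A).indicator ν x := ENNReal.tsum_mono_subtype _ hαγ

theorem sum_inv_vArea_le_VEL {ι : Type*} {Γ : Set (Set V)} {s : Finset ι}
    {ν : ι → V → ℝ≥0∞} (hadm : ∀ k ∈ s, vAdmissible Γ (ν k))
    (hdisj : (s : Set ι).PairwiseDisjoint fun k => Function.support (ν k)) :
    ∑ k ∈ s, (vArea (ν k))⁻¹ ≤ VEL Γ := by
  set T := ∑ k ∈ s, (vArea (ν k))⁻¹
  by_cases hzero : ∃ k ∈ s, vArea (ν k) = 0
  · obtain ⟨k, hk, h0⟩ := hzero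
    have hMOD : MOD Γ = 0 := le_antisymm ((MOD_le_vArea (hadm k hk)).trans h0.le) zero_le
    simp [VEL, hMOD]
  push Not at hzero
  have hT : T ≠ ⊤ := ENNReal.sum_ne_top.2 fun k hk => ENNReal.inv_ne_top.2 (hzero k hk)
  rcases eq_or_ne T 0 with hT0 | hT0
  · simp [hT0]
  set c : ι → ℝ≥0∞ := fun k => (vArea (ν k))⁻¹ * T⁻¹
  have hc : ∑ k ∈ s, c k = 1 := by rw [← Finset.sum_mul, ENNReal.mul_inv_cancel hT0 hT]
  have hadm_g : vAdmissible Γ (∑ k ∈ s, c k • ν k) := by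
    intro γ hγ
    calc (1 : ℝ≥0∞) = ∑ k ∈ s, c k * 1 := by simp [hc]
      _ ≤ ∑ k ∈ s, c k * ∑' x : γ, ν k x := by gcongr with k hk; exact hadm k hk γ hγ
      _ = ∑' x : γ, (∑ k ∈ s, c k • ν k) x := by
        simp only [Finset.sum_apply, Pi.smul_apply, smul_eq_mul, ← ENNReal.tsum_mul_left]
        exact (Summable.tsum_finsetSum fun _ _ => ENNReal.summable).symm
  have harea : vArea (∑ k ∈ s, c k • ν k) ≤ T⁻¹ := by
    rw [vArea_sum_of_pairwiseDisjoint (hdisj.mono fun k => Function.support_const_smul_subset ..)]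
    calc ∑ k ∈ s, vArea (c k • ν k) = ∑ k ∈ s, c k * ((vArea (ν k))⁻¹ * vArea (ν k)) * T⁻¹ := by
          simp only [vArea_smul, c]
          exact Finset.sum_congr rfl fun k _ => by ring
      _ ≤ ∑ k ∈ s, c k * 1 * T⁻¹ := by gcongr; exact ENNReal.inv_mul_le_one _
      _ = T⁻¹ := by rw [← Finset.sum_mul, ← Finset.sum_mul]; simp [hc]
  calc T = (T⁻¹)⁻¹ := (inv_inv T).symm
    _ ≤ VEL Γ := ENNReal.inv_le_inv.2 ((MOD_le_vArea hadm_g).trans harea)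

theorem sum_VEL_le_VEL_of_pairwiseDisjoint {ι : Type*} (s : Finset ι) (A : ι → Set (Set V))
    {Γ : Set (Set V)} (hA : (s : Set ι).PairwiseDisjoint fun k => ⋃₀ A k)
    (hΓ : ∀ γ ∈ Γ, ∀ k ∈ s, ∃ α ∈ A k, α ⊆ γ) :
    ∑ k ∈ s, VEL (A k) ≤ VEL Γ := by
  classical
  set F : ι → (V → ℝ≥0∞) → ℝ≥0∞ := fun k ν => ⨆ (_ : vAdmissible (A k) ν), (vArea ν)⁻¹
  have hVEL : ∀ k, VEL (A k) = ⨆ g : ι → V → ℝ≥0∞, F k (g k) := fun k =>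
    (by simp only [VEL, MOD, ENNReal.inv_iInf, F] : VEL (A k) = ⨆ ν, F k ν).trans
      ((Function.surjective_eval (β := fun _ : ι => V → ℝ≥0∞) k).iSup_comp (F k)).symm
  have hdir : ∀ ν ν' : ι → V → ℝ≥0∞, ∃ μ : ι → V → ℝ≥0∞,
      ∀ k, F k (ν k) ≤ F k (μ k) ∧ F k (ν' k) ≤ F k (μ k) := fun ν ν' =>
    ⟨fun k => if F k (ν k) ≤ F k (ν' k) then ν' k else ν k, fun k => by
      dsimp only
      split_ifs with h
      · exact ⟨h, le_rfl⟩
      · exact ⟨le_rfl, (not_le.1 h).le⟩⟩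
  simp only [hVEL]
  rw [ENNReal.finsetSum_iSup hdir]
  refine iSup_le fun ν => ?_
  set t := s.filter fun k => vAdmissible (A k) (ν k)
  have ht : ∀ k ∈ t, k ∈ s ∧ vAdmissible (A k) (ν k) := fun k hk => Finset.mem_filter.1 hk
  calc ∑ k ∈ s, F k (ν k) = ∑ k ∈ t, (vArea (ν k))⁻¹ := by
        simp only [F, iSup_eq_if, bot_eq_zero, t, Finset.sum_filter]
    _ ≤ ∑ k ∈ t, (vArea ((⋃₀ A k).indicator (ν k)))⁻¹ := by
        gcongr with k; exact vArea_indicator_le _ _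
    _ ≤ VEL Γ := sum_inv_vArea_le_VEL
        (fun k hk => vAdmissible_indicator_sUnion (ht k hk).2 fun γ hγ => hΓ γ hγ k (ht k hk).1)
        ((hA.subset (Finset.coe_subset.2 (Finset.filter_subset _ s))).mono
          fun k => Set.support_indicator_subset)

end Modulus

section Paths

variable {V : Type*} {G : SimpleGraph V}

def directPaths (G : SimpleGraph V) (X Y B : Set V) : Set (Set V) :=
  {S | ∃ (a b : V) (p : G.Walk a b), p.IsPath ∧ a ∈ X ∧ b ∈ Y ∧
    (∀ y ∈ p.support, y ∈ B → y = a ∨ y = b) ∧ S = {x | x ∈ p.support}}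

theorem directPaths_subset_pathFamily (X Y B : Set V) :
    directPaths G X Y B ⊆ pathFamily G X Y := by
  rintro _ ⟨a, b, p, -, ha, hb, -, rfl⟩
  exact ⟨a, b, p, ha, hb, rfl⟩

theorem directPaths_anti {X Y B B' : Set V} (h : B ⊆ B') :
    directPaths G X Y B' ⊆ directPaths G X Y B := by
  rintro _ ⟨a, b, p, hp, ha, hb, hB, rfl⟩
  exact ⟨a, b, p, hp, ha, hb, fun y hy hyB => hB y hy (h hyB), rfl⟩

theorem exists_directPaths_subset_support [DecidableEq V] {X Y L U : Set V}
    (hL : ∀ S ∈ pathFamily G L Y, (S ∩ X).Nonempty)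
    (hU : ∀ S ∈ pathFamily G X U, (S ∩ Y).Nonempty)
    {u v : V} (w : G.Walk u v) (hu : u ∈ X) (hv : v ∈ Y) :
    ∃ α ∈ directPaths G X Y (L ∪ X ∪ Y ∪ U), α ⊆ {x | x ∈ w.support} := by
  induction hn : w.length using Nat.strong_induction_on generalizing u v with
  | _ n ih =>
  by_cases hdirect : ∀ y ∈ w.support, y ∈ L ∪ X ∪ Y ∪ U → y = u ∨ y = v
  · exact ⟨_, ⟨u, v, w.bypass, w.bypass_isPath, hu, hv,
      fun y hy => hdirect y (w.support_bypass_subset_support hy), rfl⟩,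
      fun x hx => w.support_bypass_subset_support hx⟩
  push Not at hdirect
  obtain ⟨y, hy, hyB, hyu, hyv⟩ := hdirect
  have hyB' : y ∈ L ∪ X ∨ y ∈ Y ∪ U := by
    simp only [Set.mem_union] at hyB ⊢; tauto
  rcases hyB' with hyLX | hyYU
  · set r := w.dropUntil y hy
    obtain ⟨z, hz, hzX⟩ : ∃ z ∈ r.support, z ∈ X := by
      rcases hyLX with hyL | hyX
      · exact hL _ ⟨y, v, r, hyL, hv, rfl⟩
      · exact ⟨y, r.start_mem_support, hyX⟩
    obtain ⟨α, hα, hαr⟩ := ih _ ((r.length_dropUntil_le_length hz).trans_lt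
      (w.length_dropUntil_lt_length hy hyu) |>.trans_eq hn) (r.dropUntil z hz) hzX hv rfl
    exact ⟨α, hα, fun x hx => w.support_dropUntil_subset_support hy
      (r.support_dropUntil_subset_support hz (hαr hx))⟩
  · set r := w.takeUntil y hy
    obtain ⟨z, hz, hzY⟩ : ∃ z ∈ r.support, z ∈ Y := by
      rcases hyYU with hyY | hyU
      · exact ⟨y, r.end_mem_support, hyY⟩
      · exact hU _ ⟨u, y, r, hu, hyU, rfl⟩
    obtain ⟨α, hα, hαr⟩ := ih _ ((r.length_takeUntil_le_length hz).trans_lt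
      (w.length_takeUntil_lt_length hy hyv) |>.trans_eq hn) (r.takeUntil z hz) hu hzY rfl
    exact ⟨α, hα, fun x hx => w.support_takeUntil_subset_support hy
      (r.support_takeUntil_subset_support hz (hαr hx))⟩

end Paths

section Chain

variable {V : Type*} {G : SimpleGraph V} {m : ℕ} {W : ℕ → Set V}
  (hsep : ∀ i₁ i₂ i₃ : ℕ, 1 ≤ i₁ → i₁ < i₂ → i₂ < i₃ → i₃ ≤ 2 * m →
    ∀ S ∈ pathFamily G (W i₁) (W i₃), (S ∩ W i₂).Nonempty)
include hsep

theorem exists_directPaths_subset_of_chain {k : ℕ} (hk : k ∈ Finset.Icc 1 m) {γ : Set V}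
    (hγ : γ ∈ pathFamily G (W 1) (W (2 * m))) :
    ∃ α ∈ directPaths G (W (2 * k - 1)) (W (2 * k)) (⋃ j ∈ Set.Icc 1 (2 * m), W j), α ⊆ γ := by
  classical
  rw [Finset.mem_Icc] at hk
  obtain ⟨u, v, w, hu, hv, rfl⟩ := hγ
  obtain ⟨a, ha, haW⟩ : ∃ a ∈ w.support, a ∈ W (2 * k - 1) := by
    rcases (by omega : k = 1 ∨ 1 < k) with rfl | hk1
    · exact ⟨u, w.start_mem_support, hu⟩
    · exact hsep 1 (2 * k - 1) (2 * m) le_rfl (by omega) (by omega) le_rfl _ ⟨u, v, w, hu, hv, rfl⟩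
  set r := w.dropUntil a ha
  obtain ⟨b, hb, hbW⟩ : ∃ b ∈ r.support, b ∈ W (2 * k) := by
    rcases (by omega : k = m ∨ k < m) with rfl | hkm
    · exact ⟨v, r.end_mem_support, hv⟩
    · exact hsep (2 * k - 1) (2 * k) (2 * m) (by omega) (by omega) (by omega) le_rfl _
        ⟨a, v, r, haW, hv, rfl⟩
  set L := ⋃ j ∈ Set.Ico 1 (2 * k - 1), W j
  set U := ⋃ j ∈ Set.Ioc (2 * k) (2 * m), W j
  have hL : ∀ S ∈ pathFamily G L (W (2 * k)), (S ∩ W (2 * k - 1)).Nonempty := by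
    rintro _ ⟨x, y, q, hx, hy, rfl⟩
    obtain ⟨j, hj, hx⟩ := Set.mem_iUnion₂.1 hx
    exact hsep j (2 * k - 1) (2 * k) hj.1 hj.2 (by omega) (by omega) _ ⟨x, y, q, hx, hy, rfl⟩
  have hU : ∀ S ∈ pathFamily G (W (2 * k - 1)) U, (S ∩ W (2 * k)).Nonempty := by
    rintro _ ⟨x, y, q, hx, hy, rfl⟩
    obtain ⟨j, hj, hy⟩ := Set.mem_iUnion₂.1 hy
    exact hsep (2 * k - 1) (2 * k) j (by omega) (by omega) hj.1 hj.2 _ ⟨x, y, q, hx, hy, rfl⟩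
  have hcover : (⋃ j ∈ Set.Icc 1 (2 * m), W j) ⊆ L ∪ W (2 * k - 1) ∪ W (2 * k) ∪ U := by
    refine Set.iUnion₂_subset fun j hj x hx => ?_
    rcases (by omega : j < 2 * k - 1 ∨ j = 2 * k - 1 ∨ j = 2 * k ∨ 2 * k < j) with h | rfl | rfl | h
    · exact Or.inl (Or.inl (Or.inl (Set.mem_biUnion ⟨hj.1, h⟩ hx)))
    · exact Or.inl (Or.inl (Or.inr hx))
    · exact Or.inl (Or.inr hx)
    · exact Or.inr (Set.mem_biUnion ⟨h, hj.2⟩ hx)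
  obtain ⟨α, hα, hαr⟩ := exists_directPaths_subset_support hL hU (r.takeUntil b hb) haW hbW
  exact ⟨α, directPaths_anti hcover hα, fun x hx => w.support_dropUntil_subset_support ha
    (r.support_takeUntil_subset_support hb (hαr hx))⟩

theorem notMem_sUnion_directPaths_of_lt (hdisj : (Set.Icc 1 (2 * m)).PairwiseDisjoint W)
    {k k' : ℕ} (hk : 1 ≤ k) (hkk' : k < k') (hk' : k' ≤ m) {x : V}
    (hx : x ∈ ⋃₀ directPaths G (W (2 * k - 1)) (W (2 * k)) (⋃ j ∈ Set.Icc 1 (2 * m), W j)) :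
    x ∉ ⋃₀ directPaths G (W (2 * k' - 1)) (W (2 * k')) (⋃ j ∈ Set.Icc 1 (2 * m), W j) := by
  classical
  rintro ⟨_, ⟨u', v', p', -, hu', hv', hp'B, rfl⟩, hxp'⟩
  obtain ⟨_, ⟨u, v, p, hp, hu, hv, hpB, rfl⟩, hxp⟩ := hx
  have hB : ∀ j, 1 ≤ j → j ≤ 2 * m → W j ⊆ ⋃ j ∈ Set.Icc 1 (2 * m), W j :=
    fun j h1 h2 => Set.subset_biUnion_of_mem (u := W) ⟨h1, h2⟩
  have hne : ∀ i j y, 1 ≤ i → i ≤ 2 * m → 1 ≤ j → j ≤ 2 * m → i ≠ j → y ∈ W i → y ∉ W j :=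
    fun i j y hi1 hi2 hj1 hj2 hij hyi hyj => hij (hdisj.elim_set ⟨hi1, hi2⟩ ⟨hj1, hj2⟩ y hyi hyj)
  have hp' : ∀ y ∈ p'.support, y ∉ W (2 * k) := fun y hy hyW => by
    rcases hp'B y hy (hB (2 * k) (by omega) (by omega) hyW) with rfl | rfl
    · exact hne _ _ y (by omega) (by omega) (by omega) (by omega) (by omega) hu' hyW
    · exact hne _ _ y (by omega) (by omega) (by omega) (by omega) (by omega) hv' hyW
  obtain ⟨y, hy, hyW⟩ := hsep (2 * k - 1) (2 * k) (2 * k') (by omega) (by omega) (by omega)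
    (by omega) _ ⟨u, v', (p.takeUntil x hxp).append (p'.dropUntil x hxp'), hu, hv', rfl⟩
  rcases (SimpleGraph.Walk.mem_support_append_iff _ _).1 hy with hy | hy
  · rcases hpB y (p.support_takeUntil_subset_support hxp hy)
      (hB (2 * k) (by omega) (by omega) hyW) with rfl | rfl
    · exact hne _ _ y (by omega) (by omega) (by omega) (by omega) (by omega) hu hyW
    · have hxy : x = y := by_contra fun h =>
        SimpleGraph.Walk.endpoint_notMem_support_takeUntil hp hxp (Ne.symm h) hy
      exact hp' x hxp' (hxy ▸ hyW)
  · exact hp' y (p'.support_dropUntil_subset_support hxp' hy) hyW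

theorem pairwiseDisjoint_sUnion_directPaths (hdisj : (Set.Icc 1 (2 * m)).PairwiseDisjoint W) :
    (Set.Icc 1 m).PairwiseDisjoint fun k =>
      ⋃₀ directPaths G (W (2 * k - 1)) (W (2 * k)) (⋃ j ∈ Set.Icc 1 (2 * m), W j) := by
  intro k hk k' hk' hne
  rcases lt_or_gt_of_ne hne with h | h
  · exact Set.disjoint_left.2 fun x hx =>
      notMem_sUnion_directPaths_of_lt hsep hdisj hk.1 h hk'.2 hx
  · exact Set.disjoint_right.2 fun x hx =>
      notMem_sUnion_directPaths_of_lt hsep hdisj hk'.1 h hk.2 hx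

end Chain

theorem stmt_9_general {V : Type*} (G : SimpleGraph V) (m : ℕ) (W : ℕ → Set V)
    (hdisj : ∀ i ∈ Finset.Icc 1 (2 * m), ∀ j ∈ Finset.Icc 1 (2 * m), i ≠ j →
      Disjoint (W i) (W j))
    (hsep : ∀ i₁ i₂ i₃ : ℕ, 1 ≤ i₁ → i₁ < i₂ → i₂ < i₃ → i₃ ≤ 2 * m →
      ∀ S ∈ pathFamily G (W i₁) (W i₃), (S ∩ W i₂).Nonempty) :
    ∑ k ∈ Finset.Icc 1 m, VEL (pathFamily G (W (2 * k - 1)) (W (2 * k))) ≤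
      VEL (pathFamily G (W 1) (W (2 * m))) := by
  have hW : (Set.Icc 1 (2 * m)).PairwiseDisjoint W := fun i hi j hj =>
    hdisj i (Finset.mem_Icc.2 hi) j (Finset.mem_Icc.2 hj)
  calc ∑ k ∈ Finset.Icc 1 m, VEL (pathFamily G (W (2 * k - 1)) (W (2 * k)))
      ≤ ∑ k ∈ Finset.Icc 1 m,
          VEL (directPaths G (W (2 * k - 1)) (W (2 * k)) (⋃ j ∈ Set.Icc 1 (2 * m), W j)) :=
        Finset.sum_le_sum fun k _ => VEL_anti (directPaths_subset_pathFamily _ _ _)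
    _ ≤ VEL (pathFamily G (W 1) (W (2 * m))) :=
        sum_VEL_le_VEL_of_pairwiseDisjoint _ _
          (by simpa only [Finset.coe_Icc] using pairwiseDisjoint_sUnion_directPaths hsep hW)
          fun _ hγ _ hk => exists_directPaths_subset_of_chain hsep hk hγ

/-- Superadditivity of vertex extremal length along nested separating families
(He, Lemma 5.1). -/
theorem stmt_9 {V : Type*} (G : SimpleGraph V) (m : ℕ) (hm : 0 < m) (W : ℕ → Set V)
    (hdisj : ∀ i ∈ Finset.Icc 1 (2 * m), ∀ j ∈ Finset.Icc 1 (2 * m), i ≠ j →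
      Disjoint (W i) (W j))
    (hne : ∀ i ∈ Finset.Icc 1 (2 * m), (W i).Nonempty)
    (hsep : ∀ i₁ i₂ i₃ : ℕ, 1 ≤ i₁ → i₁ < i₂ → i₂ < i₃ → i₃ ≤ 2 * m →
      ∀ S ∈ pathFamily G (W i₁) (W i₃), (S ∩ W i₂).Nonempty) :
    ∑ k ∈ Finset.Icc 1 m, VEL (pathFamily G (W (2 * k - 1)) (W (2 * k))) ≤
      VEL (pathFamily G (W 1) (W (2 * m))) :=
  stmt_9_general G m W hdisj hsep
end

section
/- Let $\Theta_i, \Theta_j, \Theta_k \in [0, \pi)$ and suppose a three-circle configuration exists: three circles $C_i, C_j, C_k$ in the Euclidean plane with radii $r_i, r_j, r_k$, pairwise intersecting with exterior angles $\Theta_i$ (between $C_j, C_k$), $\Theta_j$ (between $C_k, C_i$), $\Theta_k$ (between $C_i, C_j$), i.e., center distances given by the law-of-cosines formulas. If the three closed disks have a common point whose every neighborhood meets all three disk interiors appropriately (specifically $D_i \cap D_j \cap D_k \neq \emptyset$), then $\Theta_i + \Theta_j + \Theta_k \geq \pi$. Equivalently, if $\Theta_i + \Theta_j + \Theta_k <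 \pi$ then $D_i \cap D_j \cap D_k = \emptyset$. -/
/-!
Move the common point `x` to the origin and lift each centre `p - x`, which lies in its disk
`‖p - x‖ ≤ r`, to the vector `(p - x, √(r² - ‖p - x‖²))` of length `r` in `E × ℝ`. By AM-GM the
lifts of two centres at distance `l` have inner product at most `(r² + s² - l²) / 2 = -r s cos Θ`,
so they span an angle of at least `π - Θ`. Three vectors span pairwise angles of total at most
`2π` (triangle inequality for angles, routed through the negative of one of them), whence
`3π - (Θi + Θj + Θk) ≤ 2π`.
-/

open Real InnerProductGeometry
open scoped RealInnerProductSpace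

variable {E : Type*} [NormedAddCommGroup E]

noncomputable def sphereLift (r : ℝ) (u : E) : WithLp 2 (E × ℝ) :=
  WithLp.toLp 2 (u, √(r ^ 2 - ‖u‖ ^ 2))

theorem norm_sphereLift {r : ℝ} {u : E} (hr : 0 ≤ r) (hu : ‖u‖ ≤ r) : ‖sphereLift r u‖ = r := by
  have hsq : ‖u‖ ^ 2 ≤ r ^ 2 := pow_le_pow_left₀ (norm_nonneg u) hu 2
  rw [← sq_eq_sq₀ (norm_nonneg _) hr, WithLp.prod_norm_sq_eq_of_L2]
  simp [sphereLift, sq_abs, sq_sqrt (sub_nonneg.2 hsq)]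

variable [InnerProductSpace ℝ E]

theorem inner_sphereLift_le {r s : ℝ} {u v : E} (hu : ‖u‖ ≤ r) (hv : ‖v‖ ≤ s) :
    ⟪sphereLift r u, sphereLift s v⟫ ≤ (r ^ 2 + s ^ 2 - ‖u - v‖ ^ 2) / 2 := by
  have hu2 := sq_sqrt (sub_nonneg.2 (pow_le_pow_left₀ (norm_nonneg u) hu 2))
  have hv2 := sq_sqrt (sub_nonneg.2 (pow_le_pow_left₀ (norm_nonneg v) hv 2))
  simp only [sphereLift, WithLp.prod_inner_apply, RCLike.inner_apply, conj_trivial]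
  rw [norm_sub_sq_real]
  nlinarith [sq_nonneg (√(r ^ 2 - ‖u‖ ^ 2) - √(s ^ 2 - ‖v‖ ^ 2))]

theorem angle_add_angle_add_angle_le_two_pi (x y z : E) :
    angle x y + angle y z + angle z x ≤ 2 * π := by
  have := angle_le_angle_add_angle y (-x) z
  rw [angle_neg_right, angle_neg_left, angle_comm y x] at this
  rw [angle_comm z x]
  linarith

theorem pi_sub_le_angle_of_inner_le {x y : E} {r s Θ : ℝ} (hx : ‖x‖ = r) (hy : ‖y‖ = s)
    (hr : 0 < r) (hs : 0 < s) (hΘ : Θ ∈ Set.Icc 0 π) (h : ⟪x, y⟫ ≤ -(r * s * cos Θ)) :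
    π - Θ ≤ angle x y := by
  have hcos : ⟪x, y⟫ / (‖x‖ * ‖y‖) ≤ cos (π - Θ) := by
    rw [cos_pi_sub, hx, hy, div_le_iff₀ (by positivity)]
    linarith
  calc π - Θ = arccos (cos (π - Θ)) := (arccos_cos (by linarith [hΘ.2]) (by linarith [hΘ.1])).symm
    _ ≤ angle x y := antitone_arccos hcos

theorem pi_sub_le_angle_sphereLift {p q x : E} {r s Θ : ℝ} (hr : 0 < r) (hs : 0 < s)
    (hΘ : Θ ∈ Set.Icc 0 π) (hpq : dist p q = √(r ^ 2 + s ^ 2 + 2 * r * s * cos Θ))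
    (hxp : dist x p ≤ r) (hxq : dist x q ≤ s) :
    π - Θ ≤ angle (sphereLift r (p - x)) (sphereLift s (q - x)) := by
  rw [dist_comm, dist_eq_norm] at hxp hxq
  have hrad : 0 ≤ r ^ 2 + s ^ 2 + 2 * r * s * cos Θ := by
    nlinarith [sq_nonneg (r - s), mul_pos hr hs, neg_one_le_cos Θ]
  have hdist : ‖(p - x) - (q - x)‖ ^ 2 = r ^ 2 + s ^ 2 + 2 * r * s * cos Θ := by
    rw [sub_sub_sub_cancel_right, ← dist_eq_norm, hpq, sq_sqrt hrad]
  refine pi_sub_le_angle_of_inner_le (norm_sphereLift hr.le hxp) (norm_sphereLift hs.le hxq)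
    hr hs hΘ ?_
  linarith [inner_sphereLift_le (r := r) (s := s) hxp hxq]

/-- Lemma 2.18: for a three-circle configuration, the three closed disks have a common
point only if `Θi + Θj + Θk ≥ π`; equivalently, if `Θi + Θj + Θk < π` then the triple
intersection is empty. -/
theorem stmt_16 (Θi Θj Θk ri rj rk : ℝ)
    (hΘi : Θi ∈ Set.Ico 0 π) (hΘj : Θj ∈ Set.Ico 0 π) (hΘk : Θk ∈ Set.Ico 0 π)
    (hri : 0 < ri) (hrj : 0 < rj) (hrk : 0 < rk)
    (pi pj pk : EuclideanSpace ℝ (Fin 2))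
    (hij : dist pi pj = Real.sqrt (ri ^ 2 + rj ^ 2 + 2 * ri * rj * Real.cos Θk))
    (hjk : dist pj pk = Real.sqrt (rj ^ 2 + rk ^ 2 + 2 * rj * rk * Real.cos Θi))
    (hki : dist pk pi = Real.sqrt (rk ^ 2 + ri ^ 2 + 2 * rk * ri * Real.cos Θj)) :
    ((Metric.closedBall pi ri ∩ Metric.closedBall pj rj ∩ Metric.closedBall pk rk).Nonempty →
        π ≤ Θi + Θj + Θk) ∧
      (Θi + Θj + Θk < π →
        Metric.closedBall pi ri ∩ Metric.closedBall pj rj ∩ Metric.closedBall pk rk = ∅) := by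
  have main : (Metric.closedBall pi ri ∩ Metric.closedBall pj rj ∩
      Metric.closedBall pk rk).Nonempty → π ≤ Θi + Θj + Θk := by
    rintro ⟨x, ⟨hxi, hxj⟩, hxk⟩
    have hk := pi_sub_le_angle_sphereLift hri hrj (Set.Ico_subset_Icc_self hΘk) hij hxi hxj
    have hi := pi_sub_le_angle_sphereLift hrj hrk (Set.Ico_subset_Icc_self hΘi) hjk hxj hxk
    have hj := pi_sub_le_angle_sphereLift hrk hri (Set.Ico_subset_Icc_self hΘj) hki hxk hxi
    linarith [angle_add_angle_add_angle_le_two_pi (sphereLift ri (pi - x))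
      (sphereLift rj (pj - x)) (sphereLift rk (pk - x))]
  exact ⟨main, fun hlt => Set.not_nonempty_iff_eq_empty.mp fun hne => (main hne).not_gt hlt⟩
end

section
/- Let $\Theta_i, \Theta_j, \Theta_k \in [0, \pi)$ satisfy $\Theta_i + \Theta_j + \Theta_k \leq \pi$. Then for any $r_i, r_j, r_k > 0$, the hyperbolic lengths $l_{ij} = \operatorname{arcosh}\big(\cosh r_i \cosh r_j + \sinh r_i \sinh r_j \cos\Theta_k\big)$ (and cyclically $l_{jk}, l_{ki}$ with angles $\Theta_i, \Theta_j$ respectively) satisfy the strict triangle inequalities $l_{ij} < l_{jk} + l_{ki}$, $l_{jk} < l_{ki} + l_{ij}$, $l_{ki} < l_{ij} + l_{jk}$. -/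
/-!
The three circles have center distances `lᵢⱼ = arcosh cₖ` with `cₖ > 1`, and the strict triangle
inequalities for `arcosh c₁, arcosh c₂, arcosh c₃` all follow from positivity of the Gram
determinant `1 + 2 c₁ c₂ c₃ - c₁² - c₂² - c₃²` (for one of them, square
`c₁ < cosh (arcosh c₂ + arcosh c₃)`). Using `cosh² = 1 + sinh²`, this determinant expands into a
sum of terms each of which is nonnegative because `cos Θ ∈ (-1, 1]`, and because the angle bound
`Θᵢ + Θⱼ + Θₖ ≤ π` gives `cos Θᵢ + cos Θⱼ cos Θₖ ≥ sin Θⱼ sin Θₖ ≥ 0`; the term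
`2 sinh² rᵢ sinh² rⱼ sinh² rₖ (1 + cos Θᵢ cos Θⱼ cos Θₖ)` is strictly positive.
-/

open Real Set

/-- Inverse hyperbolic cosine. -/
noncomputable def arcosh (x : ℝ) : ℝ := Real.log (x + Real.sqrt (x ^ 2 - 1))

theorem arcosh_eq_real_arcosh : _root_.arcosh = Real.arcosh := rfl

def gramDet (c₁ c₂ c₃ : ℝ) : ℝ := 1 + 2 * c₁ * c₂ * c₃ - c₁ ^ 2 - c₂ ^ 2 - c₃ ^ 2

theorem gramDet_rotate (c₁ c₂ c₃ : ℝ) : gramDet c₂ c₃ c₁ = gramDet c₁ c₂ c₃ := by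
  unfold gramDet; ring

theorem mul_mem_Ioc_neg_one_one {x y : ℝ} (hx : x ∈ Ioc (-1) 1) (hy : y ∈ Ioc (-1) 1) :
    x * y ∈ Ioc (-1) 1 := by
  obtain ⟨hx₀, hx₁⟩ := hx
  obtain ⟨hy₀, hy₁⟩ := hy
  constructor <;> nlinarith [mul_pos (neg_lt_iff_pos_add'.mp hx₀) (neg_lt_iff_pos_add'.mp hy₀)]

namespace Real

theorem arcosh_lt_arcosh_add_arcosh {c₁ c₂ c₃ : ℝ} (h₁ : 0 < c₁) (h₂ : 1 ≤ c₂) (h₃ : 1 ≤ c₃)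
    (h : c₁ < c₂ * c₃ + √(c₂ ^ 2 - 1) * √(c₃ ^ 2 - 1)) :
    arcosh c₁ < arcosh c₂ + arcosh c₃ := by
  have hsum : 0 ≤ arcosh c₂ + arcosh c₃ := add_nonneg (arcosh_nonneg h₂) (arcosh_nonneg h₃)
  rw [← arcosh_cosh hsum, arcosh_lt_arcosh h₁ (cosh_pos _), cosh_add, cosh_arcosh h₂,
    cosh_arcosh h₃, sinh_arcosh h₂, sinh_arcosh h₃]
  exact h

theorem lt_mul_add_sqrt_mul_sqrt_of_gramDet_pos {c₁ c₂ c₃ : ℝ} (h₂ : 1 ≤ c₂) (h₃ : 1 ≤ c₃)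
    (hG : 0 < gramDet c₁ c₂ c₃) : c₁ < c₂ * c₃ + √(c₂ ^ 2 - 1) * √(c₃ ^ 2 - 1) := by
  have hsq : (c₁ - c₂ * c₃) ^ 2 < (√(c₂ ^ 2 - 1) * √(c₃ ^ 2 - 1)) ^ 2 := by
    rw [mul_pow, sq_sqrt (by nlinarith), sq_sqrt (by nlinarith)]
    unfold gramDet at hG
    linarith
  linarith [abs_lt.mp (abs_lt_of_sq_lt_sq hsq (by positivity))]

theorem arcosh_triangle_of_gramDet_pos {c₁ c₂ c₃ : ℝ} (h₁ : 1 ≤ c₁) (h₂ : 1 ≤ c₂)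
    (h₃ : 1 ≤ c₃) (hG : 0 < gramDet c₁ c₂ c₃) :
    arcosh c₁ < arcosh c₂ + arcosh c₃ ∧ arcosh c₂ < arcosh c₃ + arcosh c₁ ∧
      arcosh c₃ < arcosh c₁ + arcosh c₂ := by
  have hG₂ : 0 < gramDet c₂ c₃ c₁ := gramDet_rotate c₁ c₂ c₃ ▸ hG
  have hG₃ : 0 < gramDet c₃ c₁ c₂ := gramDet_rotate c₂ c₃ c₁ ▸ hG₂
  exact ⟨arcosh_lt_arcosh_add_arcosh (by linarith) h₂ h₃
      (lt_mul_add_sqrt_mul_sqrt_of_gramDet_pos h₂ h₃ hG),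
    arcosh_lt_arcosh_add_arcosh (by linarith) h₃ h₁
      (lt_mul_add_sqrt_mul_sqrt_of_gramDet_pos h₃ h₁ hG₂),
    arcosh_lt_arcosh_add_arcosh (by linarith) h₁ h₂
      (lt_mul_add_sqrt_mul_sqrt_of_gramDet_pos h₁ h₂ hG₃)⟩

theorem one_lt_cosh_mul_cosh_add_sinh_mul_sinh_mul {r s x : ℝ} (hr : 0 < r) (hs : 0 < s)
    (hx : -1 < x) : 1 < cosh r * cosh s + sinh r * sinh s * x := by
  have hpos : 0 < sinh r * sinh s * (1 + x) :=
    mul_pos (mul_pos (sinh_pos_iff.mpr hr) (sinh_pos_iff.mpr hs)) (by linarith)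
  have := one_le_cosh (r - s)
  rw [cosh_sub] at this
  linarith

theorem gramDet_cosh_mul_cosh_add_sinh_mul_sinh_mul (ri rj rk xi xj xk : ℝ) :
    gramDet (cosh ri * cosh rj + sinh ri * sinh rj * xk)
        (cosh rj * cosh rk + sinh rj * sinh rk * xi)
        (cosh rk * cosh ri + sinh rk * sinh ri * xj) =
      sinh rj ^ 2 * sinh rk ^ 2 * (1 - xi ^ 2) + sinh rk ^ 2 * sinh ri ^ 2 * (1 - xj ^ 2)
        + sinh ri ^ 2 * sinh rj ^ 2 * (1 - xk ^ 2)
        + 2 * sinh ri ^ 2 * sinh rj ^ 2 * sinh rk ^ 2 * (1 + xi * xj * xk)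
        + 2 * cosh rj * cosh rk * sinh ri ^ 2 * sinh rj * sinh rk * (xi + xj * xk)
        + 2 * cosh rk * cosh ri * sinh rj ^ 2 * sinh rk * sinh ri * (xj + xk * xi)
        + 2 * cosh ri * cosh rj * sinh rk ^ 2 * sinh ri * sinh rj * (xk + xi * xj) := by
  unfold gramDet
  linear_combination
    (-cosh rk ^ 2 + 2 * cosh rj * cosh rk * sinh rj * sinh rk * xi - cosh rj ^ 2
        + 2 * cosh rj ^ 2 * cosh rk ^ 2) * cosh_sq ri
      + (-1 - sinh ri ^ 2 + cosh rk ^ 2 + 2 * cosh rk ^ 2 * sinh ri ^ 2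
        + 2 * cosh ri * cosh rk * sinh ri * sinh rk * xj) * cosh_sq rj
      + (sinh rj ^ 2 + sinh ri ^ 2 + 2 * sinh ri ^ 2 * sinh rj ^ 2
        + 2 * cosh ri * cosh rj * sinh ri * sinh rj * xk) * cosh_sq rk

theorem gramDet_cosh_mul_cosh_add_sinh_mul_sinh_mul_pos {ri rj rk xi xj xk : ℝ}
    (hri : 0 < ri) (hrj : 0 < rj) (hrk : 0 < rk)
    (hxi : xi ∈ Ioc (-1) 1) (hxj : xj ∈ Ioc (-1) 1) (hxk : xk ∈ Ioc (-1) 1)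
    (hi : 0 ≤ xi + xj * xk) (hj : 0 ≤ xj + xk * xi) (hk : 0 ≤ xk + xi * xj) :
    0 < gramDet (cosh ri * cosh rj + sinh ri * sinh rj * xk)
        (cosh rj * cosh rk + sinh rj * sinh rk * xi)
        (cosh rk * cosh ri + sinh rk * sinh ri * xj) := by
  have := sinh_pos_iff.mpr hri
  have := sinh_pos_iff.mpr hrj
  have := sinh_pos_iff.mpr hrk
  have := cosh_pos ri
  have := cosh_pos rj
  have := cosh_pos rk
  have : 0 ≤ 1 - xi ^ 2 := by nlinarith [(mul_mem_Ioc_neg_one_one hxi hxi).2]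
  have : 0 ≤ 1 - xj ^ 2 := by nlinarith [(mul_mem_Ioc_neg_one_one hxj hxj).2]
  have : 0 ≤ 1 - xk ^ 2 := by nlinarith [(mul_mem_Ioc_neg_one_one hxk hxk).2]
  have : 0 < 1 + xi * xj * xk := by
    linarith [(mul_mem_Ioc_neg_one_one (mul_mem_Ioc_neg_one_one hxi hxj) hxk).1]
  rw [gramDet_cosh_mul_cosh_add_sinh_mul_sinh_mul]
  positivity

theorem cos_mem_Ioc_of_mem_Ico {θ : ℝ} (hθ : θ ∈ Ico 0 π) : cos θ ∈ Ioc (-1) 1 :=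
  ⟨by simpa using cos_lt_cos_of_nonneg_of_le_pi hθ.1 le_rfl hθ.2, cos_le_one θ⟩

theorem cos_add_cos_mul_cos_nonneg {α β γ : ℝ} (hα : 0 ≤ α) (hβ : 0 ≤ β) (hγ : 0 ≤ γ)
    (h : α + β + γ ≤ π) : 0 ≤ cos α + cos β * cos γ := by
  have hc : cos (π - (β + γ)) ≤ cos α :=
    cos_le_cos_of_nonneg_of_le_pi hα (by linarith) (by linarith)
  rw [cos_pi_sub, cos_add] at hc
  nlinarith [mul_nonneg (sin_nonneg_of_nonneg_of_le_pi hβ (by linarith))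
    (sin_nonneg_of_nonneg_of_le_pi hγ (by linarith))]

end Real

/-- Hyperbolic three-circle configuration lemma, case `Θi + Θj + Θk ≤ π`: the
hyperbolic center distances satisfy the strict triangle inequalities. -/
theorem stmt_17 (Θi Θj Θk : ℝ)
    (hi : Θi ∈ Set.Ico 0 π) (hj : Θj ∈ Set.Ico 0 π) (hk : Θk ∈ Set.Ico 0 π)
    (hsum : Θi + Θj + Θk ≤ π)
    (ri rj rk : ℝ) (hri : 0 < ri) (hrj : 0 < rj) (hrk : 0 < rk) :
    let lij := _root_.arcosh (Real.cosh ri * Real.cosh rj + Real.sinh ri * Real.sinh rj * Real.cos Θk)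
    let ljk := _root_.arcosh (Real.cosh rj * Real.cosh rk + Real.sinh rj * Real.sinh rk * Real.cos Θi)
    let lki := _root_.arcosh (Real.cosh rk * Real.cosh ri + Real.sinh rk * Real.sinh ri * Real.cos Θj)
    lij < ljk + lki ∧ ljk < lki + lij ∧ lki < lij + ljk := by
  intro lij ljk lki
  simp only [lij, ljk, lki, arcosh_eq_real_arcosh]
  have hxi := cos_mem_Ioc_of_mem_Ico hi
  have hxj := cos_mem_Ioc_of_mem_Ico hj
  have hxk := cos_mem_Ioc_of_mem_Ico hk
  refine arcosh_triangle_of_gramDet_pos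
    (one_lt_cosh_mul_cosh_add_sinh_mul_sinh_mul hri hrj hxk.1).le
    (one_lt_cosh_mul_cosh_add_sinh_mul_sinh_mul hrj hrk hxi.1).le
    (one_lt_cosh_mul_cosh_add_sinh_mul_sinh_mul hrk hri hxj.1).le
    (gramDet_cosh_mul_cosh_add_sinh_mul_sinh_mul_pos hri hrj hrk hxi hxj hxk ?_ ?_ ?_)
  · exact cos_add_cos_mul_cos_nonneg hi.1 hj.1 hk.1 hsum
  · exact cos_add_cos_mul_cos_nonneg hj.1 hk.1 hi.1 (by linarith)
  · exact cos_add_cos_mul_cos_nonneg hk.1 hi.1 hj.1 (by linarith)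
end
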